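/- arXiv:2402.18987 — 8 statements merged into one kernel-verified Lean document; each statement's English description precedes it below -/
import Mathlib

section
/- A family {x_{n,m}}_{n∈ℕ*, 1≤m≤n} ⊂ ℂ satisfies the Catalan's triangle system x_{n+1,k+1} = Σ_{j=k}^{n} x_{n,j} if and only if for all n ≥ 2 and 2 ≤ m ≤ n, x_{n,m} = Σ_{h=0}^{n-m} C_{m-1}(h, h+m-2) · x_{n-m-h+1,1}, where C_{m-1} is the Catalan trapezoid of order m-1. -/
/-- Catalan trapezoid of order `m`. -/
def catalanTrapezoid (m n k : ℕ) : ℕ :=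
  if k + 1 ≤ m then (n + k).choose k
  else if k ≤ n + m - 1 then (n + k).choose k - (n + k).choose (k - m)
  else 0

namespace Stmt8Aux

/-- Abbreviation for the coefficients in the formula. -/
def c (m h : ℕ) : ℕ := catalanTrapezoid (m - 1) h (h + m - 2)

lemma choose_mono {N i j : ℕ} (hij : i ≤ j) (h : i + j ≤ N) :
    N.choose i ≤ N.choose j := by
  rcases le_or_gt j (N - j) with hj | hj
  · -- j ≤ N/2 side: monotone chain
    have hhalf : j ≤ N / 2 := by omega
    clear h hj
    induction j with
    | zero =>
      have : i = 0 := by omega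
      simp [this]
    | succ j ih =>
      rcases Nat.lt_or_ge i (j+1) with hlt | hge
      · have h1 : i ≤ j := by omega
        have h2 : j ≤ N / 2 := by omega
        calc N.choose i ≤ N.choose j := ih h1 h2
          _ ≤ N.choose (j+1) := Nat.choose_le_succ_of_lt_half_left (by omega)
      · have : i = j + 1 := by omega
        simp [this]
  · -- use symmetry
    have hjN : j ≤ N := by omega
    rw [← Nat.choose_symm hjN]
    set j' := N - j with hj'
    have hij' : i ≤ j' := by omega
    have hhalf : j' ≤ N / 2 := by omega
    clear_value j'
    clear hj' hj h hjN
    induction j' with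
    | zero =>
      have : i = 0 := by omega
      simp [this]
    | succ j ih =>
      rcases Nat.lt_or_ge i (j+1) with hlt | hge
      · have h1 : i ≤ j := by omega
        have h2 : j ≤ N / 2 := by omega
        calc N.choose i ≤ N.choose j := ih h1 h2
          _ ≤ N.choose (j+1) := Nat.choose_le_succ_of_lt_half_left (by omega)
      · have : i = j + 1 := by omega
        simp [this]

lemma c_zero (m : ℕ) (hm : 2 ≤ m) : c m 0 = 1 := by
  obtain ⟨m', rfl⟩ : ∃ m', m = m' + 2 := ⟨m - 2, by omega⟩
  simp only [c, catalanTrapezoid]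
  rw [if_pos (by omega)]
  simp

lemma c_one (h : ℕ) : c 1 h = 0 := by
  cases h with
  | zero =>
    simp only [c, catalanTrapezoid]
    norm_num
  | succ h' =>
    simp only [c, catalanTrapezoid]
    rw [if_neg (by omega), if_pos (by omega)]
    simp

lemma c_formula (m' h' : ℕ) :
    c (m' + 2) (h' + 1) =
      (2 * h' + m' + 2).choose (h' + m' + 1) - (2 * h' + m' + 2).choose h' := by
  simp only [c, catalanTrapezoid]
  rw [if_neg (by omega), if_pos (by omega)]
  have e1 : h' + 1 + (m' + 2) - 2 = h' + m' + 1 := by omega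
  have e2 : h' + 1 + (h' + m' + 1) = 2 * h' + m' + 2 := by omega
  have e3 : h' + m' + 1 - (m' + 2 - 1) = h' := by omega
  rw [e1, e2, e3]

lemma c_step (k h : ℕ) : c (k + 2) (h + 1) = c (k + 1) (h + 1) + c (k + 3) h := by
  match k, h with
  | 0, 0 => decide
  | k + 1, 0 =>
    have h1 := c_formula k 0
    have h2 := c_formula (k + 1) 0
    have h3 := c_zero (k + 4) (by omega)
    simp only [Nat.choose_succ_self_right, Nat.choose_zero_right] at h1 h2
    have e1 : 2 * 0 + k + 2 = k + 2 := by omega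
    have e2 : 2 * 0 + (k + 1) + 2 = k + 3 := by omega
    rw [e1] at h1; rw [e2] at h2
    rw [show k + 1 + 2 = k + 3 from rfl, show k + 1 + 1 = k + 2 from rfl,
      show k + 1 + 3 = k + 4 from rfl]
    rw [h1, h2, h3]
    omega
  | 0, h + 1 =>
    have h1 := c_formula 0 (h + 1)   -- c 2 (h+2)
    have h2 := c_formula 1 h         -- c 3 (h+1)
    have h3 := c_one (h + 2)
    have p1 : (2 * (h + 1) + 0 + 2).choose (h + 1 + 0 + 1) =
        (2 * h + 3).choose (h + 1) + (2 * h + 3).choose (h + 2) := by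
      rw [show 2 * (h + 1) + 0 + 2 = (2 * h + 3) + 1 from by omega,
        show h + 1 + 0 + 1 = (h + 1) + 1 from by omega, Nat.choose_succ_succ]
    have p2 : (2 * (h + 1) + 0 + 2).choose (h + 1) =
        (2 * h + 3).choose h + (2 * h + 3).choose (h + 1) := by
      rw [show 2 * (h + 1) + 0 + 2 = (2 * h + 3) + 1 from by omega, Nat.choose_succ_succ]
    have m1 : (2 * h + 3).choose h ≤ (2 * h + 3).choose (h + 2) :=
      choose_mono (by omega) (by omega)
    have e2 : 2 * h + 1 + 2 = 2 * h + 3 := by omega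
    have e3 : h + 1 + 1 = h + 2 := by omega
    rw [e2, e3] at h2
    rw [show (0:ℕ) + 2 = 2 from rfl] at h1
    rw [show (0:ℕ) + 3 = 3 from rfl, h1, h2, h3, p1, p2]
    omega
  | k + 1, h + 1 =>
    have h1 := c_formula (k + 1) (h + 1)  -- c (k+3) (h+2)
    have h2 := c_formula k (h + 1)        -- c (k+2) (h+2)
    have h3 := c_formula (k + 2) h        -- c (k+4) (h+1)
    have p1 : (2 * (h + 1) + (k + 1) + 2).choose (h + 1 + (k + 1) + 1) =
        (2 * h + k + 4).choose (h + k + 2) + (2 * h + k + 4).choose (h + k + 3) := by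
      rw [show 2 * (h + 1) + (k + 1) + 2 = (2 * h + k + 4) + 1 from by omega,
        show h + 1 + (k + 1) + 1 = (h + k + 2) + 1 from by omega, Nat.choose_succ_succ]
    have p2 : (2 * (h + 1) + (k + 1) + 2).choose (h + 1) =
        (2 * h + k + 4).choose h + (2 * h + k + 4).choose (h + 1) := by
      rw [show 2 * (h + 1) + (k + 1) + 2 = (2 * h + k + 4) + 1 from by omega,
        Nat.choose_succ_succ]
    have m1 : (2 * h + k + 4).choose (h + 1) ≤ (2 * h + k + 4).choose (h + k + 2) :=
      choose_mono (by omega) (by omega)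
    have m2 : (2 * h + k + 4).choose h ≤ (2 * h + k + 4).choose (h + k + 3) :=
      choose_mono (by omega) (by omega)
    have e2 : 2 * (h + 1) + k + 2 = 2 * h + k + 4 := by omega
    have e2' : h + 1 + k + 1 = h + k + 2 := by omega
    rw [e2, e2'] at h2
    have e3 : 2 * h + (k + 2) + 2 = 2 * h + k + 4 := by omega
    have e3' : h + (k + 2) + 1 = h + k + 3 := by omega
    rw [e3, e3'] at h3
    rw [show k + 1 + 2 = k + 3 from rfl, show k + 1 + 1 = k + 2 from rfl,
      show k + 1 + 3 = k + 4 from rfl, h1, h2, h3, p1, p2]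
    omega

end Stmt8Aux

namespace Stmt8Aux

lemma c_sum : ∀ d K : ℕ, 2 ≤ K →
    ∑ j ∈ Finset.Icc K (K + d), c j (K + d - j) = c (K + 1) d := by
  intro d
  induction d with
  | zero =>
    intro K hK
    simp [c_zero K hK, c_zero (K + 1) (by omega)]
  | succ d ih =>
    intro K hK
    have hins : Finset.Icc K (K + (d + 1)) = insert K (Finset.Icc (K + 1) (K + (d + 1))) := by
      ext j; simp only [Finset.mem_Icc, Finset.mem_insert]; omega
    rw [hins, Finset.sum_insert (by simp)]
    rw [show K + (d + 1) = (K + 1) + d from by omega]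
    rw [ih (K + 1) (by omega)]
    rw [show K + 1 + d - K = d + 1 from by omega]
    obtain ⟨K', rfl⟩ : ∃ K', K = K' + 2 := ⟨K - 2, by omega⟩
    have := c_step (K' + 1) d
    rw [show K' + 1 + 2 = K' + 3 from rfl, show K' + 1 + 1 = K' + 2 from rfl,
      show K' + 1 + 3 = K' + 4 from rfl] at this
    rw [show K' + 2 + 1 = K' + 3 from rfl, show K' + 2 + 2 = K' + 4 from rfl]
    omega

/-- The formula's right-hand side as a function of the first column `a`. -/
noncomputable def G (a : ℕ → ℂ) (n m : ℕ) : ℂ :=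
  ∑ h ∈ Finset.range (n - m + 1), (c m h : ℂ) * a (n - m - h + 1)

lemma G_eq (a : ℕ → ℂ) (n m : ℕ) (hm : m ≤ n) :
    G a n m = ∑ s ∈ Finset.Icc m n, (c m (s - m) : ℂ) * a (n - s + 1) := by
  rw [← Finset.Ico_add_one_right_eq_Icc, Finset.sum_Ico_eq_sum_range,
    show n + 1 - m = n - m + 1 from by omega]
  unfold G
  apply Finset.sum_congr rfl
  intro i _
  rw [show m + i - m = i from by omega, show n - (m + i) = n - m - i from by omega]

lemma key' (a : ℕ → ℂ) (n K : ℕ) (hK : 2 ≤ K) :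
    ∑ j ∈ Finset.Icc K n, G a n j =
      ∑ s ∈ Finset.Icc K n, (c (K + 1) (s - K) : ℂ) * a (n - s + 1) := by
  have hrw : ∀ j ∈ Finset.Icc K n,
      G a n j = ∑ s ∈ Finset.Icc j n, (c j (s - j) : ℂ) * a (n - s + 1) := by
    intro j hj
    simp only [Finset.mem_Icc] at hj
    exact G_eq a n j hj.2
  rw [Finset.sum_congr rfl hrw]
  rw [Finset.sum_comm' (s := Finset.Icc K n) (t := fun j => Finset.Icc j n)
      (t' := Finset.Icc K n) (s' := fun s => Finset.Icc K s)
      (by intro j s; simp only [Finset.mem_Icc]; omega)]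
  apply Finset.sum_congr rfl
  intro s hs
  simp only [Finset.mem_Icc] at hs
  rw [← Finset.sum_mul, ← Nat.cast_sum]
  congr 2
  have h := c_sum (s - K) K hK
  rwa [show K + (s - K) = s from by omega] at h

lemma hL (a : ℕ → ℂ) (n k : ℕ) (hk : k ≤ n) :
    G a (n + 1) (k + 1) = ∑ s ∈ Finset.Icc k n, (c (k + 1) (s - k) : ℂ) * a (n - s + 1) := by
  rw [G_eq a (n + 1) (k + 1) (by omega), ← Finset.Ico_add_one_right_eq_Icc, ← Finset.Ico_add_one_right_eq_Icc,
    Finset.sum_Ico_eq_sum_range, Finset.sum_Ico_eq_sum_range,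
    show n + 1 + 1 - (k + 1) = n + 1 - k from by omega]
  apply Finset.sum_congr rfl
  intro i _
  rw [show k + 1 + i - (k + 1) = i from by omega, show k + i - k = i from by omega,
    show n + 1 - (k + 1 + i) = n - (k + i) from by omega]

lemma key (a : ℕ → ℂ) (n k : ℕ) (h1 : 1 ≤ k) (hk : k ≤ n) :
    G a (n + 1) (k + 1) =
      (if k = 1 then a n else 0) + ∑ j ∈ Finset.Icc (max k 2) n, G a n j := by
  rcases le_or_gt 2 k with h2 | h2
  · rw [show max k 2 = k from by omega, if_neg (by omega), zero_add,
      key' a n k h2, hL a n k hk]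
  · have hk1 : k = 1 := by omega
    subst hk1
    rw [show max 1 2 = 2 from rfl, if_pos rfl, key' a n 2 le_rfl, hL a n 1 hk]
    rw [show Finset.Icc 1 n = insert 1 (Finset.Icc 2 n) from by
      ext j; simp only [Finset.mem_Icc, Finset.mem_insert]; omega]
    rw [Finset.sum_insert (by simp)]
    congr 1
    · rw [show (1:ℕ) - 1 = 0 from rfl, c_zero 2 le_rfl, show n - 1 + 1 = n from by omega]
      simp
    · apply Finset.sum_congr rfl
      intro s hs
      simp only [Finset.mem_Icc] at hs
      have h := c_step 0 (s - 2)
      rw [c_one (s - 2 + 1), zero_add] at h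
      rw [show s - 1 = s - 2 + 1 from by omega, h]
      norm_num

lemma split_sum (f : ℕ → ℂ) (n k : ℕ) (h1 : 1 ≤ k) (hk : k ≤ n) :
    ∑ j ∈ Finset.Icc k n, f j =
      (if k = 1 then f 1 else 0) + ∑ j ∈ Finset.Icc (max k 2) n, f j := by
  rcases le_or_gt 2 k with h2 | h2
  · rw [show max k 2 = k from by omega, if_neg (by omega), zero_add]
  · have hk1 : k = 1 := by omega
    subst hk1
    rw [show max 1 2 = 2 from rfl, if_pos rfl,
      show Finset.Icc 1 n = insert 1 (Finset.Icc 2 n) from by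
        ext j; simp only [Finset.mem_Icc, Finset.mem_insert]; omega,
      Finset.sum_insert (by simp)]

end Stmt8Aux


open Stmt8Aux

theorem stmt_8 (x : ℕ → ℕ → ℂ) :
    (∀ n k : ℕ, 1 ≤ n → 1 ≤ k → k ≤ n →
        x (n + 1) (k + 1) = ∑ j ∈ Finset.Icc k n, x n j) ↔
      (∀ n m : ℕ, 2 ≤ n → 2 ≤ m → m ≤ n →
        x n m = ∑ h ∈ Finset.range (n - m + 1),
          (catalanTrapezoid (m - 1) h (h + m - 2) : ℂ) * x (n - m - h + 1) 1) := by
  have hGdef : ∀ n m : ℕ, G (fun r => x r 1) n m =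
      ∑ h ∈ Finset.range (n - m + 1),
        (catalanTrapezoid (m - 1) h (h + m - 2) : ℂ) * x (n - m - h + 1) 1 := by
    intro n m; rfl
  constructor
  · intro H
    have CL : ∀ n m : ℕ, 2 ≤ m → m ≤ n → x n m = G (fun r => x r 1) n m := by
      intro n
      induction n with
      | zero => intro m hm hmn; omega
      | succ n ih =>
        intro m hm hmn
        obtain ⟨k, rfl⟩ : ∃ k, m = k + 1 := ⟨m - 1, by omega⟩
        have hk1 : 1 ≤ k := by omega
        have hkn : k ≤ n := by omega
        rw [H n k (by omega) hk1 hkn, key _ n k hk1 hkn,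
          split_sum (fun j => x n j) n k hk1 hkn]
        congr 1
        apply Finset.sum_congr rfl
        intro j hj
        simp only [Finset.mem_Icc] at hj
        exact ih j (le_trans (le_max_right k 2) hj.1) hj.2
    intro n m hn hm hmn
    rw [CL n m hm hmn, hGdef]
  · intro H n k hn hk1 hkn
    have hx : ∀ n m : ℕ, 2 ≤ m → m ≤ n → x n m = G (fun r => x r 1) n m := by
      intro n m hm hmn
      rw [hGdef]
      exact H n m (by omega) hm hmn
    rw [hx (n + 1) (k + 1) (by omega) (by omega), key _ n k hk1 hkn,
      split_sum (fun j => x n j) n k hk1 hkn]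
    congr 1
    apply Finset.sum_congr rfl
    intro j hj
    simp only [Finset.mem_Icc] at hj
    exact (hx n j (le_trans (le_max_right k 2) hj.1) hj.2).symm
end

section
/- Any solution of the Catalan's triangle system satisfies x_{n,2} = Σ_{k=0}^{n-2} C_k · x_{n-k-1,1} for all n ≥ 3, where C_k is the k-th Catalan number. -/
/-- The `k`-th Catalan number `(1/(k+1))·binom(2k,k)`. -/
def catalanNum (k : ℕ) : ℕ := (2 * k).choose k / (k + 1)

lemma catalanNum_eq_catalan (k : ℕ) : catalanNum k = catalan k := by
  rw [catalanNum, catalan_eq_centralBinom_div, Nat.centralBinom]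

lemma catalan_succ_range (n : ℕ) :
    catalan (n + 1) = ∑ i ∈ Finset.range (n + 1), catalan i * catalan (n - i) := by
  rw [catalan_succ, Finset.sum_range]

lemma swap_sum (m : ℕ) (f : ℕ → ℕ → ℂ) :
    ∑ k ∈ Finset.range m, ∑ i ∈ Finset.range (m - k), f k i
      = ∑ j ∈ Finset.range m, ∑ k ∈ Finset.range (j + 1), f k (j - k) := by
  induction m with
  | zero => simp
  | succ m ih =>
    rw [Finset.sum_range_succ (fun j => ∑ k ∈ Finset.range (j + 1), f k (j - k)), ← ih,
      Finset.sum_range_succ]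
    have h1 : ∀ k ∈ Finset.range m,
        ∑ i ∈ Finset.range (m + 1 - k), f k i
          = ∑ i ∈ Finset.range (m - k), f k i + f k (m - k) := by
      intro k hk
      rw [Finset.mem_range] at hk
      have : m + 1 - k = (m - k) + 1 := by omega
      rw [this, Finset.sum_range_succ]
    rw [Finset.sum_congr rfl h1, Finset.sum_add_distrib]
    simp [Finset.sum_range_succ]
    ring

lemma rowSum : ∀ n : ℕ, ∀ y : ℕ → ℕ → ℂ,
    (∀ n k : ℕ, 1 ≤ n → 1 ≤ k → k ≤ n →
      y (n + 1) (k + 1) = ∑ j ∈ Finset.Icc k n, y n j) →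
    1 ≤ n →
    ∑ j ∈ Finset.Icc 1 n, y n j = ∑ k ∈ Finset.range n, (catalan k : ℂ) * y (n - k) 1 := by
  intro n
  induction n using Nat.strong_induction_on with
  | _ n IH =>
    intro y hsys hn
    match n, hn with
    | 1, _ => simp
    | (m + 2), _ =>
      set M := m + 1 with hM
      have hM1 : 1 ≤ M := by omega
      -- the tail-sum family also satisfies the system
      set z : ℕ → ℕ → ℂ := fun n k => ∑ j ∈ Finset.Icc k n, y n j with hz
      have hzsys : ∀ n k : ℕ, 1 ≤ n → 1 ≤ k → k ≤ n →
          z (n + 1) (k + 1) = ∑ j ∈ Finset.Icc k n, z n j := by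
        intro n k hn1 hk1 hkn
        have hmap : Finset.Icc (k + 1) (n + 1)
            = (Finset.Icc k n).map (addRightEmbedding 1) := by
          rw [Finset.map_add_right_Icc]
        simp only [hz]
        rw [hmap, Finset.sum_map]
        refine Finset.sum_congr rfl fun j hj => ?_
        rw [Finset.mem_Icc] at hj
        exact hsys n j hn1 (le_trans hk1 hj.1) hj.2
      -- split off the first term
      have hsplit : Finset.Icc 1 (M + 1) = insert 1 (Finset.Icc 2 (M + 1)) := by
        ext a; simp [Finset.mem_Icc]; omega
      have hnotmem : (1 : ℕ) ∉ Finset.Icc 2 (M + 1) := by simp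
      have hmap2 : Finset.Icc 2 (M + 1) = (Finset.Icc 1 M).map (addRightEmbedding 1) := by
        rw [Finset.map_add_right_Icc]
      have step1 : ∑ j ∈ Finset.Icc 1 (M + 1), y (M + 1) j
          = y (M + 1) 1 + ∑ k ∈ Finset.Icc 1 M, z M k := by
        rw [hsplit, Finset.sum_insert hnotmem, hmap2, Finset.sum_map]
        congr 1
        refine Finset.sum_congr rfl fun k hk => ?_
        rw [Finset.mem_Icc] at hk
        exact hsys M k hM1 hk.1 hk.2
      -- apply IH to z at M
      have hzM : ∑ k ∈ Finset.Icc 1 M, z M k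
          = ∑ k ∈ Finset.range M, (catalan k : ℂ) * z (M - k) 1 := by
        exact IH M (by omega) z hzsys hM1
      -- unfold z (M - k) 1 via IH on y
      have hz1 : ∀ k ∈ Finset.range M, z (M - k) 1
          = ∑ i ∈ Finset.range (M - k), (catalan i : ℂ) * y (M - k - i) 1 := by
        intro k hk
        rw [Finset.mem_range] at hk
        exact IH (M - k) (by omega) y hsys (by omega)
      have hrw : ∑ k ∈ Finset.range M, (catalan k : ℂ) * z (M - k) 1
          = ∑ k ∈ Finset.range M, (catalan k : ℂ)
              * ∑ i ∈ Finset.range (M - k), (catalan i : ℂ) * y (M - k - i) 1 :=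
        Finset.sum_congr rfl fun k hk => by rw [hz1 k hk]
      rw [step1, hzM, hrw]
      simp only [Finset.mul_sum]
      have hswap := swap_sum M (fun k i => (catalan k : ℂ) * ((catalan i : ℂ) * y (M - k - i) 1))
      rw [hswap]
      -- RHS: split off k = 0
      conv_rhs => rw [show m + 2 = M + 1 from rfl, Finset.sum_range_succ']
      simp only [catalan_zero, Nat.cast_one, one_mul, Nat.sub_zero, Nat.add_sub_cancel]
      rw [add_comm]
      congr 1
      refine Finset.sum_congr rfl fun j hj => ?_
      rw [Finset.mem_range] at hj
      have : M + 1 - (j + 1) = M - j := by omega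
      rw [this, catalan_succ_range j]
      push_cast
      rw [Finset.sum_mul]
      refine Finset.sum_congr rfl fun k hk => ?_
      rw [Finset.mem_range] at hk
      have h2 : M - k - (j - k) = M - j := by omega
      rw [h2]
      ring

theorem stmt_9 (x : ℕ → ℕ → ℂ)
    (hsys : ∀ n k : ℕ, 1 ≤ n → 1 ≤ k → k ≤ n →
      x (n + 1) (k + 1) = ∑ j ∈ Finset.Icc k n, x n j) :
    ∀ n : ℕ, 3 ≤ n →
      x n 2 = ∑ k ∈ Finset.range (n - 1), (catalanNum k : ℂ) * x (n - k - 1) 1 := by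
  intro n hn
  obtain ⟨m, rfl⟩ : ∃ m, n = m + 1 := ⟨n - 1, by omega⟩
  have hm : 1 ≤ m := by omega
  have h1 : x (m + 1) 2 = ∑ j ∈ Finset.Icc 1 m, x m j := hsys m 1 hm le_rfl hm
  rw [h1, rowSum m x hsys hm]
  simp only [Nat.add_sub_cancel]
  refine Finset.sum_congr rfl fun k hk => ?_
  rw [catalanNum_eq_catalan]
  congr 2
  omega
end

section
/- Any solution of the Catalan's triangle system satisfies x_{n,3} = Σ_{h=0}^{n-3} C_2(h, h+1) · x_{n-h-2,1} for all n ≥ 3, where C_2 is the Catalan trapezoid of order 2. -/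
/-- Number of admissible paths of length `t` from column `k` down to column `1`. -/
def gAux : ℕ → ℕ → ℕ
  | 0, k => if k = 1 then 1 else 0
  | t + 1, k => if 2 ≤ k then ∑ j ∈ Finset.Icc (k - 1) (t + 1), gAux t j else 0

lemma gAux_zero_of_lt : ∀ t k : ℕ, t + 1 < k → gAux t k = 0 := by
  intro t
  induction t with
  | zero => intro k hk; simp [gAux]; omega
  | succ t ih =>
    intro k hk
    have h2 : 2 ≤ k := by omega
    have : Finset.Icc (k - 1) (t + 1) = ∅ := by
      apply Finset.Icc_eq_empty; omega
    simp [gAux, h2, this]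

lemma gAux_one_of_pos (t : ℕ) (ht : 1 ≤ t) : gAux t 1 = 0 := by
  cases t with
  | zero => omega
  | succ s => simp [gAux]

lemma gAux_closed : ∀ t : ℕ, 1 ≤ t → ∀ k : ℕ, 1 ≤ k → k ≤ t + 1 →
    (gAux t k : ℤ) = ((2 * t - k).choose (t - 1) : ℤ) - ((2 * t - k).choose t : ℤ) := by
  intro t ht
  induction t, ht using Nat.le_induction with
  | base =>
    intro k hk1 hk2
    interval_cases k
    · simp [gAux]
    · simp [gAux]
  | succ t ht ih =>
    intro k hk1 hk2
    rcases Nat.lt_or_ge k 2 with hk | hk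
    · -- k = 1
      have hk1' : k = 1 := by omega
      subst hk1'
      rw [gAux_one_of_pos (t + 1) (by omega)]
      have h1 : 2 * (t + 1) - 1 = 2 * t + 1 := by omega
      have h2 : (2 * t + 1).choose ((t + 1) - 1) = (2 * t + 1).choose (t + 1) := by
        have := Nat.choose_symm (n := 2 * t + 1) (k := t + 1) (by omega)
        have he : 2 * t + 1 - (t + 1) = t := by omega
        rw [he] at this
        simpa using this
      rw [h1, h2]
      simp
    · -- 2 ≤ k
      have hunfold : gAux (t + 1) k = ∑ j ∈ Finset.Icc (k - 1) (t + 1), gAux t j := by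
        simp [gAux, hk]
      rw [hunfold]
      push_cast
      have hstep : ∀ j ∈ Finset.Icc (k - 1) (t + 1),
          (gAux t j : ℤ) = ((2 * t - j).choose (t - 1) : ℤ) - ((2 * t - j).choose t : ℤ) := by
        intro j hj
        simp only [Finset.mem_Icc] at hj
        exact ih j (by omega) (by omega)
      rw [Finset.sum_congr rfl hstep, Finset.sum_sub_distrib]
      have hre : ∀ r : ℕ, ∑ j ∈ Finset.Icc (k - 1) (t + 1), ((2 * t - j).choose r : ℤ)
          = ∑ i ∈ Finset.Icc (t - 1) (2 * t - (k - 1)), (i.choose r : ℤ) := by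
        intro r
        apply Finset.sum_nbij' (fun j => 2 * t - j) (fun i => 2 * t - i)
        · intro a ha; simp only [Finset.mem_Icc] at ha ⊢; omega
        · intro a ha; simp only [Finset.mem_Icc] at ha ⊢; omega
        · intro a ha; simp only [Finset.mem_Icc] at ha; omega
        · intro a ha; simp only [Finset.mem_Icc] at ha; omega
        · intro a ha; rfl
      rw [hre (t - 1), hre t]
      have hsum1 : ∑ i ∈ Finset.Icc (t - 1) (2 * t - (k - 1)), (i.choose (t - 1) : ℤ)
          = ((2 * t - (k - 1) + 1).choose t : ℤ) := by
        have := Nat.sum_Icc_choose (2 * t - (k - 1)) (t - 1)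
        have ht' : t - 1 + 1 = t := by omega
        rw [ht'] at this
        exact_mod_cast this
      have hsum2 : ∑ i ∈ Finset.Icc (t - 1) (2 * t - (k - 1)), (i.choose t : ℤ)
          = ((2 * t - (k - 1) + 1).choose (t + 1) : ℤ) := by
        rcases Nat.lt_or_ge (2 * t - (k - 1)) t with hb | hb
        · -- then k = t + 2 and the interval is {t-1}
          have hb' : 2 * t - (k - 1) = t - 1 := by omega
          rw [hb']
          rw [Finset.Icc_self, Finset.sum_singleton]
          have h1 : (t - 1).choose t = 0 := Nat.choose_eq_zero_of_lt (by omega)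
          have h2 : (t - 1 + 1).choose (t + 1) = 0 := Nat.choose_eq_zero_of_lt (by omega)
          rw [h1, h2]
        · have hsub : Finset.Icc t (2 * t - (k - 1)) ⊆ Finset.Icc (t - 1) (2 * t - (k - 1)) := by
            apply Finset.Icc_subset_Icc_left; omega
          have hz : ∀ i ∈ Finset.Icc (t - 1) (2 * t - (k - 1)),
              i ∉ Finset.Icc t (2 * t - (k - 1)) → (i.choose t : ℤ) = 0 := by
            intro i hi hni
            simp only [Finset.mem_Icc] at hi hni
            have : i < t := by omega
            rw [Nat.choose_eq_zero_of_lt this]; simp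
          rw [← Finset.sum_subset hsub hz]
          exact_mod_cast Nat.sum_Icc_choose (2 * t - (k - 1)) t
      rw [hsum1, hsum2]
      have he1 : 2 * t - (k - 1) + 1 = 2 * (t + 1) - k := by omega
      rw [he1]

lemma gAux_eq_cat (h : ℕ) : gAux (h + 2) 3 = catalanTrapezoid 2 h (h + 1) := by
  have hg : (gAux (h + 2) 3 : ℤ)
      = ((2 * h + 1).choose (h + 1) : ℤ) - ((2 * h + 1).choose (h + 2) : ℤ) := by
    have := gAux_closed (h + 2) (by omega) 3 (by omega) (by omega)
    have he : 2 * (h + 2) - 3 = 2 * h + 1 := by omega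
    have he2 : h + 2 - 1 = h + 1 := by omega
    rw [he, he2] at this
    exact this
  rcases Nat.eq_zero_or_pos h with rfl | hp
  · have h1 : catalanTrapezoid 2 0 1 = 1 := by
      simp [catalanTrapezoid]
    rw [h1]
    have : (gAux 2 3 : ℤ) = 1 := by rw [hg]; simp
    exact_mod_cast this
  · have hcat : catalanTrapezoid 2 h (h + 1)
        = (2 * h + 1).choose (h + 1) - (2 * h + 1).choose (h - 1) := by
      have h1 : ¬ (h + 1 + 1 ≤ 2) := by omega
      have h2 : h + 1 ≤ h + 2 - 1 := by omega
      have e1 : h + (h + 1) = 2 * h + 1 := by omega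
      have e2 : h + 1 - 2 = h - 1 := by omega
      simp only [catalanTrapezoid, h1, if_false, h2, if_true, e1, e2]
    have hsymm : (2 * h + 1).choose (h - 1) = (2 * h + 1).choose (h + 2) := by
      have := Nat.choose_symm (n := 2 * h + 1) (k := h + 2) (by omega)
      have he : 2 * h + 1 - (h + 2) = h - 1 := by omega
      rw [he] at this
      exact this
    have hle : (2 * h + 1).choose (h + 2) ≤ (2 * h + 1).choose (h + 1) := by
      have h1 := Nat.choose_le_middle (h + 2) (2 * h + 1)
      have h2 : (2 * h + 1) / 2 = h := by omega
      rw [h2] at h1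
      have h3 : (2 * h + 1).choose h = (2 * h + 1).choose (h + 1) := by
        have := Nat.choose_symm (n := 2 * h + 1) (k := h + 1) (by omega)
        have he : 2 * h + 1 - (h + 1) = h := by omega
        rw [he] at this
        exact this
      omega
    rw [hcat, hsymm]
    have : (((2 * h + 1).choose (h + 1) - (2 * h + 1).choose (h + 2) : ℕ) : ℤ)
        = (gAux (h + 2) 3 : ℤ) := by
      rw [Nat.cast_sub hle, hg]
    exact_mod_cast this.symm

lemma main_formula (x : ℕ → ℕ → ℂ)
    (hsys : ∀ n k : ℕ, 1 ≤ n → 1 ≤ k → k ≤ n →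
      x (n + 1) (k + 1) = ∑ j ∈ Finset.Icc k n, x n j) :
    ∀ n : ℕ, 1 ≤ n → ∀ k : ℕ, 1 ≤ k → k ≤ n →
      x n k = ∑ m ∈ Finset.Icc 1 n, (gAux (n - m) k : ℂ) * x m 1 := by
  intro n hn
  induction n, hn using Nat.le_induction with
  | base =>
    intro k hk1 hk2
    have : k = 1 := by omega
    subst this
    simp [gAux]
  | succ n hn ih =>
    intro k hk1 hk2
    rcases Nat.lt_or_ge k 2 with hk | hk
    · -- k = 1
      have : k = 1 := by omega
      subst this
      rw [Finset.sum_eq_single (n + 1)]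
      · simp [gAux]
      · intro m hm hne
        simp only [Finset.mem_Icc] at hm
        rw [gAux_one_of_pos (n + 1 - m) (by omega)]
        simp
      · intro hne
        exfalso; apply hne; simp only [Finset.mem_Icc]; omega
    · -- 2 ≤ k
      have key := hsys n (k - 1) hn (by omega) (by omega)
      have hkk : k - 1 + 1 = k := by omega
      rw [hkk] at key
      rw [key]
      have hIH : ∀ j ∈ Finset.Icc (k - 1) n,
          x n j = ∑ m ∈ Finset.Icc 1 n, (gAux (n - m) j : ℂ) * x m 1 := by
        intro j hj
        simp only [Finset.mem_Icc] at hj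
        exact ih j (by omega) hj.2
      rw [Finset.sum_congr rfl hIH, Finset.sum_comm]
      rw [Finset.sum_Icc_succ_top (by omega : 1 ≤ n + 1)]
      have hlast : (gAux (n + 1 - (n + 1)) k : ℂ) * x (n + 1) 1 = 0 := by
        have : n + 1 - (n + 1) = 0 := by omega
        rw [this]
        have : gAux 0 k = 0 := by simp [gAux]; omega
        rw [this]; simp
      rw [hlast, add_zero]
      apply Finset.sum_congr rfl
      intro m hm
      simp only [Finset.mem_Icc] at hm
      rw [← Finset.sum_mul]
      congr 1
      -- ∑ j ∈ Icc (k-1) n, gAux (n-m) j = gAux (n+1-m) k  (as ℂ, via ℕ)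
      have hnat : ∑ j ∈ Finset.Icc (k - 1) n, gAux (n - m) j = gAux (n + 1 - m) k := by
        have hm1 : n + 1 - m = (n - m) + 1 := by omega
        rw [hm1]
        have hunfold : gAux ((n - m) + 1) k
            = ∑ j ∈ Finset.Icc (k - 1) ((n - m) + 1), gAux (n - m) j := by
          simp [gAux, hk]
        rw [hunfold]
        apply (Finset.sum_subset _ _).symm
        · apply Finset.Icc_subset_Icc_right; omega
        · intro j hj hnj
          simp only [Finset.mem_Icc] at hj hnj
          exact gAux_zero_of_lt (n - m) j (by omega)
      calc ∑ j ∈ Finset.Icc (k - 1) n, (gAux (n - m) j : ℂ)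
          = ((∑ j ∈ Finset.Icc (k - 1) n, gAux (n - m) j : ℕ) : ℂ) := by push_cast; ring
        _ = (gAux (n + 1 - m) k : ℂ) := by rw [hnat]

theorem stmt_10 (x : ℕ → ℕ → ℂ)
    (hsys : ∀ n k : ℕ, 1 ≤ n → 1 ≤ k → k ≤ n →
      x (n + 1) (k + 1) = ∑ j ∈ Finset.Icc k n, x n j) :
    ∀ n : ℕ, 3 ≤ n →
      x n 3 = ∑ h ∈ Finset.range (n - 2),
        (catalanTrapezoid 2 h (h + 1) : ℂ) * x (n - h - 2) 1 := by
  intro n hn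
  rw [main_formula x hsys n (by omega) 3 (by omega) hn]
  have hshrink : ∑ m ∈ Finset.Icc 1 n, (gAux (n - m) 3 : ℂ) * x m 1
      = ∑ m ∈ Finset.Icc 1 (n - 2), (gAux (n - m) 3 : ℂ) * x m 1 := by
    apply (Finset.sum_subset _ _).symm
    · apply Finset.Icc_subset_Icc_right; omega
    · intro m hm hnm
      simp only [Finset.mem_Icc] at hm hnm
      have : gAux (n - m) 3 = 0 := gAux_zero_of_lt (n - m) 3 (by omega)
      rw [this]; simp
  rw [hshrink]
  apply Finset.sum_nbij' (fun m => n - m - 2) (fun h => n - h - 2)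
  · intro a ha; simp only [Finset.mem_Icc, Finset.mem_range] at ha ⊢; omega
  · intro a ha; simp only [Finset.mem_Icc, Finset.mem_range] at ha ⊢; omega
  · intro a ha; simp only [Finset.mem_Icc] at ha; omega
  · intro a ha; simp only [Finset.mem_range] at ha; omega
  · intro a ha
    simp only [Finset.mem_Icc] at ha
    have h2 : n - (n - a - 2) - 2 = a := by omega
    rw [h2]
    obtain ⟨c, hc⟩ : ∃ c, n - a = c + 2 := ⟨n - a - 2, by omega⟩
    rw [hc]
    simp only [Nat.add_sub_cancel]
    rw [gAux_eq_cat]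
end

section
/- For all m ≥ 2 and k ∈ ℕ, Σ_{j=0}^{k} C_{j+m-1}(k-j, k+m-2) = C_m(k, k+m-1), where C_r denotes the Catalan trapezoid of order r. -/
/-- Hockey stick: sum along a column. -/
lemma hs2 (r N : ℕ) : ∑ i ∈ Finset.range N, (r + 1 + i).choose r + 1
    = (r + N + 1).choose (r + 1) := by
  induction N with
  | zero => simp
  | succ N ih =>
      rw [Finset.sum_range_succ, add_right_comm, ih]
      have : r + (N + 1) + 1 = (r + N + 1) + 1 := by omega
      rw [this]
      conv_rhs => rw [Nat.choose_succ_succ]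
      have : r + 1 + N = r + N + 1 := by omega
      rw [this, Nat.succ_eq_add_one]; omega

/-- Hockey stick: sum along a diagonal. -/
lemma hs1 (s k : ℕ) : ∑ i ∈ Finset.range (k + 1), (s + i).choose i
    = (s + k + 1).choose k := by
  induction k with
  | zero => simp
  | succ k ih =>
      rw [Finset.sum_range_succ, ih]
      have h1 : s + (k + 1) + 1 = (s + k + 1) + 1 := by omega
      rw [h1, Nat.choose_succ_succ]
      have h2 : s + (k + 1) = s + k + 1 := by omega
      rw [h2]

theorem stmt_13 (m k : ℕ) (hm : 2 ≤ m) :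
    ∑ j ∈ Finset.range (k + 1), catalanTrapezoid (j + m - 1) (k - j) (k + m - 2) =
      catalanTrapezoid m k (k + m - 1) := by
  obtain ⟨m', rfl⟩ : ∃ m', m = m' + 2 := ⟨m - 2, by omega⟩
  cases k with
  | zero => simp [catalanTrapezoid]
  | succ k =>
    set K := k + 1 with hK
    -- rewrite each term for j < K
    have hterm : ∀ j ∈ Finset.range (k + 1),
        catalanTrapezoid (j + (m' + 2) - 1) (K - j) (K + (m' + 2) - 2)
          = (2 * k + m' + 2 - j).choose (k + m' + 1)
            - (2 * k + m' + 2 - j).choose (k - j) := by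
      intro j hj
      rw [Finset.mem_range] at hj
      have hj' : j ≤ k := by omega
      unfold catalanTrapezoid
      rw [if_neg (by omega), if_pos (by omega)]
      have e1 : K - j + (K + (m' + 2) - 2) = 2 * k + m' + 2 - j := by omega
      have e2 : K + (m' + 2) - 2 = k + m' + 1 := by omega
      have e3 : k + m' + 1 - (j + (m' + 2) - 1) = k - j := by omega
      rw [e1, e2, e3]
    rw [Finset.sum_range_succ, Finset.sum_congr rfl hterm]
    -- last term equals 1
    have hlast : catalanTrapezoid (K + (m' + 2) - 1) (K - K) (K + (m' + 2) - 2) = 1 := by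
      unfold catalanTrapezoid
      rw [if_pos (by omega)]
      simp
    rw [hlast]
    -- RHS
    have hrhs : catalanTrapezoid (m' + 2) K (K + (m' + 2) - 1)
        = (2 * k + m' + 3).choose (k + m' + 2) - (2 * k + m' + 3).choose k := by
      unfold catalanTrapezoid
      rw [if_neg (by omega), if_pos (by omega)]
      have e1 : K + (K + (m' + 2) - 1) = 2 * k + m' + 3 := by omega
      have e2 : K + (m' + 2) - 1 = k + m' + 2 := by omega
      have e3 : k + m' + 2 - (m' + 2) = k := by omega
      rw [e1, e2, e3]
    rw [hrhs]
    -- pointwise inequality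
    have hle : ∀ j ∈ Finset.range (k + 1),
        (2 * k + m' + 2 - j).choose (k - j) ≤ (2 * k + m' + 2 - j).choose (k + m' + 1) := by
      intro j hj
      rw [Finset.mem_range] at hj
      have hj' : j ≤ k := by omega
      set n := 2 * k + m' + 2 - j with hn
      calc (n).choose (k - j) ≤ n.choose (k - j + 1) :=
            Nat.choose_le_succ_of_lt_half_left (by omega)
        _ = n.choose (k + m' + 1) := by
            have h1 : k - j + 1 = n - (k + m' + 1) := by omega
            rw [h1, Nat.choose_symm (by omega)]
    rw [Finset.sum_tsub_distrib _ hle]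
    -- evaluate the two sums
    have hA : ∑ j ∈ Finset.range (k + 1), (2 * k + m' + 2 - j).choose (k + m' + 1) + 1
        = (2 * k + m' + 3).choose (k + m' + 2) := by
      rw [← Finset.sum_range_reflect]
      have : ∀ j ∈ Finset.range (k + 1),
          (2 * k + m' + 2 - (k + 1 - 1 - j)).choose (k + m' + 1)
            = ((k + m' + 1) + 1 + j).choose (k + m' + 1) := by
        intro j hj; rw [Finset.mem_range] at hj
        congr 1; omega
      rw [Finset.sum_congr rfl this, hs2]
      congr 1; omega
    have hB : ∑ j ∈ Finset.range (k + 1), (2 * k + m' + 2 - j).choose (k - j)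
        = (2 * k + m' + 3).choose k := by
      rw [← Finset.sum_range_reflect]
      have : ∀ j ∈ Finset.range (k + 1),
          (2 * k + m' + 2 - (k + 1 - 1 - j)).choose (k - (k + 1 - 1 - j))
            = ((k + m' + 2) + j).choose j := by
        intro j hj; rw [Finset.mem_range] at hj
        congr 1 <;> omega
      rw [Finset.sum_congr rfl this, hs1]
      congr 1; omega
    have hBA : ∑ j ∈ Finset.range (k + 1), (2 * k + m' + 2 - j).choose (k - j)
        ≤ ∑ j ∈ Finset.range (k + 1), (2 * k + m' + 2 - j).choose (k + m' + 1) :=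
      Finset.sum_le_sum hle
    omega
end

section
/- For any n ∈ ℕ*, the number of non-crossing pair partitions {(l_h,r_h)}_{h=1}^n of {1,...,2n} with 2n - l_n = k equals C(n-1, n-k) = (k/n)·binom(2n-k-1, n-1), for every 1 ≤ k ≤ n. -/
/-- `{(l h, r h)}_{h}` is a pair partition of `{1,...,2n}`. -/
def IsPairPartition (n : ℕ) (l r : Fin n → ℕ) : Prop :=
  (∀ h, l h < r h) ∧ StrictMono l ∧
    (Finset.univ.image l ∪ Finset.univ.image r) = Finset.Icc 1 (2 * n)

/-- Non-crossing condition for a pair partition. -/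
def IsNonCrossing (n : ℕ) (l r : Fin n → ℕ) : Prop :=
  ∀ h k : Fin n, h < k → (l k < r h ↔ r k < r h)

/-- Catalan triangle `C(n,k) = ((n+1-k)/(n+1))·binom(n+k,k)`. -/
def catalanTriangle (n k : ℕ) : ℕ := (n + 1 - k) * (n + k).choose k / (n + 1)



open Finset

/-- Height function: 2·(number of elements of S in [1,m]) − m. -/
def ht (S : Finset ℕ) (m : ℕ) : ℤ := 2 * (S ∩ Finset.Icc 1 m).card - m

lemma ht_zero (S : Finset ℕ) : ht S 0 = 0 := by simp [ht]

lemma inter_Icc_succ (S : Finset ℕ) (m : ℕ) :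
    S ∩ Finset.Icc 1 (m + 1) =
      if m + 1 ∈ S then insert (m + 1) (S ∩ Finset.Icc 1 m) else S ∩ Finset.Icc 1 m := by
  split_ifs with h
  · ext x
    simp only [mem_inter, mem_Icc, mem_insert]
    constructor
    · rintro ⟨hxS, hx1, hx2⟩
      rcases eq_or_lt_of_le hx2 with he | hlt
      · exact Or.inl he
      · exact Or.inr ⟨hxS, hx1, by omega⟩
    · rintro (rfl | ⟨hxS, hx1, hx2⟩)
      · exact ⟨h, by omega, le_refl _⟩
      · exact ⟨hxS, hx1, by omega⟩
  · ext x
    simp only [mem_inter, mem_Icc]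
    constructor
    · rintro ⟨hxS, hx1, hx2⟩
      rcases eq_or_lt_of_le hx2 with he | hlt
      · exact absurd (he ▸ hxS) h
      · exact ⟨hxS, hx1, by omega⟩
    · rintro ⟨hxS, hx1, hx2⟩
      exact ⟨hxS, hx1, by omega⟩

lemma ht_succ (S : Finset ℕ) (m : ℕ) :
    ht S (m + 1) = ht S m + (if m + 1 ∈ S then 1 else -1) := by
  unfold ht
  rw [inter_Icc_succ]
  split_ifs with h
  · rw [card_insert_of_notMem (by simp)]
    push_cast; ring
  · push_cast; ring

lemma ht_of_subset {S : Finset ℕ} {N m : ℕ} (hS : S ⊆ Finset.Icc 1 N) (hm : N ≤ m) :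
    ht S m = 2 * S.card - m := by
  unfold ht
  rw [inter_eq_left.mpr (hS.trans (Finset.Icc_subset_Icc le_rfl hm))]

/-- intersection with [1,m] is unaffected by elements > m -/
lemma inter_Icc_erase {S : Finset ℕ} {t m : ℕ} (h : m < t) :
    S.erase t ∩ Finset.Icc 1 m = S ∩ Finset.Icc 1 m := by
  ext x
  simp only [mem_inter, mem_erase, mem_Icc]
  constructor
  · rintro ⟨⟨_, hxS⟩, h1, h2⟩; exact ⟨hxS, h1, h2⟩
  · rintro ⟨hxS, h1, h2⟩; exact ⟨⟨by omega, hxS⟩, h1, h2⟩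

lemma ht_erase {S : Finset ℕ} {t m : ℕ} (h : m < t) : ht (S.erase t) m = ht S m := by
  unfold ht; rw [inter_Icc_erase h]

lemma inter_Icc_insert {S : Finset ℕ} {t m : ℕ} (h : m < t) :
    insert t S ∩ Finset.Icc 1 m = S ∩ Finset.Icc 1 m := by
  ext x
  simp only [mem_inter, mem_insert, mem_Icc]
  constructor
  · rintro ⟨rfl | hxS, h1, h2⟩
    · omega
    · exact ⟨hxS, h1, h2⟩
  · rintro ⟨hxS, h1, h2⟩; exact ⟨Or.inr hxS, h1, h2⟩

lemma ht_insert {S : Finset ℕ} {t m : ℕ} (h : m < t) : ht (insert t S) m = ht S m := by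
  unfold ht; rw [inter_Icc_insert h]

/-- ballot-type subsets: S ⊆ [1, a+b], |S| = a, and every prefix has at least as many
elements of S as non-elements. -/
def goodSet (a b : ℕ) : Finset (Finset ℕ) :=
  (Finset.Icc 1 (a + b)).powerset.filter (fun S => S.card = a ∧ ∀ m ≤ a + b, 0 ≤ ht S m)

lemma mem_goodSet {a b : ℕ} {S : Finset ℕ} :
    S ∈ goodSet a b ↔ S ⊆ Finset.Icc 1 (a + b) ∧ S.card = a ∧ ∀ m ≤ a + b, 0 ≤ ht S m := by
  simp [goodSet, and_assoc]


lemma ct_mul (a b : ℕ) : (a + 1) * catalanTriangle a b = (a + 1 - b) * (a + b).choose b := by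
  rcases le_or_gt b (a + 1) with hb | hb
  · -- divisibility: (a+1) ∣ (a+1-b) * C(a+b,b)
    rcases Nat.eq_zero_or_pos b with rfl | hbpos
    · simp [catalanTriangle]
    · have key : (a + b).choose b * b = (a + b).choose (b - 1) * (a + 1) := by
        have := Nat.choose_succ_right_eq (a + b) (b - 1)
        have hb1 : b - 1 + 1 = b := by omega
        rw [hb1] at this
        rw [this]
        congr 1
        omega
      have hdvd : (a + 1) ∣ (a + 1 - b) * (a + b).choose b := by
        have : (a + 1 - b) * (a + b).choose b
            = (a + 1) * ((a + b).choose b - (a + b).choose (b - 1)) := by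
          have hle : (a + b).choose (b - 1) * (a + 1) ≤ (a + b).choose b * (a + 1) := by
            rw [← key]
            exact Nat.mul_le_mul_left _ (by omega)
          have hle' : (a + b).choose (b - 1) ≤ (a + b).choose b :=
            Nat.le_of_mul_le_mul_right hle (by omega)
          zify [hle', hb]
          have key' : ((a + b).choose b : ℤ) * b = (a + b).choose (b - 1) * (a + 1) := by
            exact_mod_cast key
          nlinarith [key']
        rw [this]; exact Dvd.intro _ rfl
      unfold catalanTriangle
      exact Nat.mul_div_cancel' hdvd
  · have h1 : a + 1 - b = 0 := by omega
    rw [h1, zero_mul, catalanTriangle, h1, zero_mul, Nat.zero_div, mul_zero]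

lemma ct_zero (a : ℕ) : catalanTriangle a 0 = 1 := by
  simp [catalanTriangle]

lemma ct_of_gt {a b : ℕ} (h : a < b) : catalanTriangle a b = 0 := by
  unfold catalanTriangle
  rw [show a + 1 - b = 0 by omega, zero_mul, Nat.zero_div]

lemma ct_rec (a b : ℕ) (hb : 1 ≤ b) (hba : b ≤ a) :
    catalanTriangle a b = catalanTriangle (a - 1) b + catalanTriangle a (b - 1) := by
  have ha : 1 ≤ a := le_trans hb hba
  have key : a * (a + 1) * catalanTriangle a b
      = a * (a + 1) * (catalanTriangle (a - 1) b + catalanTriangle a (b - 1)) := by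
    have e1 : (a + 1) * catalanTriangle a b = (a + 1 - b) * (a + b).choose b := ct_mul a b
    have e2 : a * catalanTriangle (a - 1) b = (a - b) * ((a - 1) + b).choose b := by
      have := ct_mul (a - 1) b
      rw [show a - 1 + 1 = a by omega] at this
      exact this
    have e3 : (a + 1) * catalanTriangle a (b - 1) = (a + 2 - b) * (a + (b - 1)).choose (b - 1) := by
      have := ct_mul a (b - 1)
      rw [this, show a + 1 - (b - 1) = a + 2 - b by omega]
    have e4 : a - 1 + b = a + b - 1 := by omega
    have e5 : a + (b - 1) = a + b - 1 := by omega
    rw [e4] at e2; rw [e5] at e3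
    -- pascal and the ratio identity
    set U := (a + b - 1).choose b with hU
    set V := (a + b - 1).choose (b - 1) with hV
    have pascal : (a + b).choose b = U + V := by
      have h := Nat.choose_succ_succ' (a + b - 1) (b - 1)
      rw [show a + b - 1 + 1 = a + b by omega, show b - 1 + 1 = b by omega] at h
      rw [← hU, ← hV] at h
      omega
    have ratio : U * b = V * a := by
      rw [hU, hV]
      have := Nat.choose_succ_right_eq (a + b - 1) (b - 1)
      rw [show b - 1 + 1 = b by omega] at this
      rw [this, show a + b - 1 - (b - 1) = a by omega]
    -- now pure arithmetic
    have lhs : a * ((a + 1) * catalanTriangle a b) = a * ((a + 1 - b) * (U + V)) := by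
      rw [e1, pascal]
    have rhs1 : (a + 1) * (a * catalanTriangle (a - 1) b) = (a + 1) * ((a - b) * U) := by
      rw [e2]
    have rhs2 : a * ((a + 1) * catalanTriangle a (b - 1)) = a * ((a + 2 - b) * V) := by
      rw [e3]
    have goal' : a * ((a + 1 - b) * (U + V)) = (a + 1) * ((a - b) * U) + a * ((a + 2 - b) * V) := by
      zify [show b ≤ a + 1 by omega, hba, show b ≤ a + 2 by omega]
      have ratio' : (U : ℤ) * b = V * a := by exact_mod_cast ratio
      nlinarith [ratio']
    calc a * (a + 1) * catalanTriangle a b = a * ((a + 1) * catalanTriangle a b) := by ring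
      _ = a * ((a + 1 - b) * (U + V)) := lhs
      _ = (a + 1) * ((a - b) * U) + a * ((a + 2 - b) * V) := goal'
      _ = (a + 1) * (a * catalanTriangle (a - 1) b) + a * ((a + 1) * catalanTriangle a (b - 1)) := by
          rw [rhs1, rhs2]
      _ = a * (a + 1) * (catalanTriangle (a - 1) b + catalanTriangle a (b - 1)) := by ring
  exact Nat.eq_of_mul_eq_mul_left (by positivity) key

lemma goodSet_empty {a b : ℕ} (h : a < b) : goodSet a b = ∅ := by
  ext S
  simp only [notMem_empty, iff_false, mem_goodSet]
  rintro ⟨hsub, hcard, hht⟩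
  have h1 : (S ∩ Finset.Icc 1 (a + b)).card ≤ a := by
    rw [← hcard]; exact card_le_card inter_subset_left
  have h2 := hht (a + b) le_rfl
  unfold ht at h2
  omega

lemma goodSet_zero (a : ℕ) : goodSet a 0 = {Finset.Icc 1 a} := by
  ext S
  simp only [mem_goodSet, mem_singleton, Nat.add_zero]
  constructor
  · rintro ⟨hsub, hcard, _⟩
    apply Finset.eq_of_subset_of_card_le hsub
    rw [hcard, Nat.card_Icc]; omega
  · rintro rfl
    refine ⟨subset_rfl, by rw [Nat.card_Icc]; omega, fun m hm => ?_⟩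
    unfold ht
    rw [Finset.inter_eq_right.mpr (Finset.Icc_subset_Icc le_rfl hm), Nat.card_Icc]
    omega

lemma goodSet_rec (a b : ℕ) (hb : 1 ≤ b) (hba : b ≤ a) :
    (goodSet a b).card = (goodSet (a - 1) b).card + (goodSet a (b - 1)).card := by
  have ha : 1 ≤ a := le_trans hb hba
  classical
  rw [← Finset.card_filter_add_card_filter_not (s := goodSet a b)
    (p := fun S => a + b ∈ S)]
  congr 1
  · -- S containing a+b  ↦ erase: bijection with goodSet (a-1) b
    refine Finset.card_bij' (fun S _ => S.erase (a + b)) (fun S _ => insert (a + b) S)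
      ?_ ?_ ?_ ?_
    · rintro S hS
      simp only [mem_filter, mem_goodSet] at hS
      obtain ⟨⟨hsub, hcard, hht⟩, hmem⟩ := hS
      rw [mem_goodSet]
      have he : a - 1 + b = a + b - 1 := by omega
      refine ⟨?_, ?_, ?_⟩
      · intro x hx
        rw [mem_erase] at hx
        have := hsub hx.2
        rw [Finset.mem_Icc] at this ⊢
        omega
      · rw [card_erase_of_mem hmem, hcard]
      · intro m hm
        rw [ht_erase (by omega)]
        exact hht m (by omega)
    · rintro S hS
      rw [mem_goodSet] at hS
      obtain ⟨hsub, hcard, hht⟩ := hS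
      have hnot : a + b ∉ S := by
        intro hmem
        have := hsub hmem
        rw [Finset.mem_Icc] at this
        omega
      simp only [mem_filter, mem_goodSet, mem_insert, true_or, and_true]
      refine ⟨?_, ?_, ?_⟩
      · intro x hx
        rw [mem_insert] at hx
        rw [Finset.mem_Icc]
        rcases hx with rfl | hx
        · omega
        · have := hsub hx; rw [Finset.mem_Icc] at this; omega
      · rw [card_insert_of_notMem hnot, hcard]; omega
      · intro m hm
        rcases lt_or_ge m (a + b) with hlt | hge
        · rw [ht_insert (by omega)]
          exact hht m (by omega)
        · have hmeq : m = a + b := by omega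
          subst hmeq
          have hsub' : insert (a + b) S ⊆ Finset.Icc 1 (a + b) := by
            intro x hx
            rw [mem_insert] at hx
            rw [Finset.mem_Icc]
            rcases hx with rfl | hx
            · omega
            · have := hsub hx; rw [Finset.mem_Icc] at this; omega
          rw [ht_of_subset hsub' le_rfl, card_insert_of_notMem hnot, hcard]
          push_cast
          omega
    · rintro S hS
      simp only [mem_filter] at hS
      exact Finset.insert_erase hS.2
    · rintro S hS
      rw [mem_goodSet] at hS
      have hnot : a + b ∉ S := by
        intro hmem
        have := hS.1 hmem
        rw [Finset.mem_Icc] at this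
        omega
      exact Finset.erase_insert hnot
  · -- S not containing a+b : equals goodSet a (b-1)
    congr 1
    ext S
    simp only [mem_filter, mem_goodSet]
    constructor
    · rintro ⟨⟨hsub, hcard, hht⟩, hnot⟩
      refine ⟨?_, hcard, ?_⟩
      · intro x hx
        have := hsub hx
        rw [Finset.mem_Icc] at this ⊢
        have : x ≠ a + b := fun h => hnot (h ▸ hx)
        omega
      · intro m hm
        exact hht m (by omega)
    · rintro ⟨hsub, hcard, hht⟩
      have hnot : a + b ∉ S := by
        intro hmem
        have := hsub hmem
        rw [Finset.mem_Icc] at this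
        omega
      refine ⟨⟨?_, hcard, ?_⟩, hnot⟩
      · intro x hx
        have := hsub hx
        rw [Finset.mem_Icc] at this ⊢
        omega
      · intro m hm
        rcases lt_or_ge m (a + b) with hlt | hge
        · exact hht m (by omega)
        · have hmeq : m = a + b := by omega
          subst hmeq
          have hsub' : S ⊆ Finset.Icc 1 (a + b) := by
            intro x hx
            have := hsub hx
            rw [Finset.mem_Icc] at this ⊢
            omega
          rw [ht_of_subset hsub' le_rfl, hcard]
          push_cast
          omega

lemma goodSet_card (a : ℕ) : ∀ b : ℕ, (goodSet a b).card = catalanTriangle a b := by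
  induction a using Nat.strong_induction_on with
  | _ a iha =>
    intro b
    induction b using Nat.strong_induction_on with
    | _ b ihb =>
      rcases Nat.eq_zero_or_pos b with rfl | hb
      · rw [goodSet_zero, ct_zero, card_singleton]
      rcases lt_or_ge a b with hab | hba
      · rw [goodSet_empty hab, ct_of_gt hab, card_empty]
      have ha : 1 ≤ a := le_trans hb hba
      rw [goodSet_rec a b hb hba, ct_rec a b hb hba,
        iha (a - 1) (by omega) b, ihb (b - 1) (by omega)]

/-- Left-endpoint sets of non-crossing pair partitions with max = 2n - k. -/
def topSet (n k : ℕ) : Finset (Finset ℕ) :=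
  (Finset.Icc 1 (2 * n)).powerset.filter (fun S =>
    S.card = n ∧ (∀ m ≤ 2 * n, 0 ≤ ht S m) ∧ (∀ x ∈ S, x ≤ 2 * n - k) ∧ 2 * n - k ∈ S)

lemma mem_topSet {n k : ℕ} {S : Finset ℕ} :
    S ∈ topSet n k ↔ S ⊆ Finset.Icc 1 (2 * n) ∧ S.card = n ∧ (∀ m ≤ 2 * n, 0 ≤ ht S m) ∧
      (∀ x ∈ S, x ≤ 2 * n - k) ∧ 2 * n - k ∈ S := by
  simp [topSet, and_assoc]

lemma topSet_card {n k : ℕ} (hn : 0 < n) (hk1 : 1 ≤ k) (hk2 : k ≤ n) :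
    (topSet n k).card = (goodSet (n - 1) (n - k)).card := by
  have hab : (n - 1) + (n - k) = 2 * n - k - 1 := by omega
  have htk : 1 ≤ 2 * n - k := by omega
  refine Finset.card_bij' (fun S _ => S.erase (2 * n - k)) (fun S _ => insert (2 * n - k) S)
    ?_ ?_ ?_ ?_
  · rintro S hS
    rw [mem_topSet] at hS
    obtain ⟨hsub, hcard, hht, hmax, hmem⟩ := hS
    rw [mem_goodSet, hab]
    refine ⟨?_, ?_, ?_⟩
    · intro x hx
      rw [mem_erase] at hx
      have h1 := hsub hx.2
      have h2 := hmax x hx.2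
      rw [Finset.mem_Icc] at h1 ⊢
      omega
    · rw [card_erase_of_mem hmem, hcard]
    · intro m hm
      rw [ht_erase (by omega)]
      exact hht m (by omega)
  · rintro S hS
    rw [mem_goodSet, hab] at hS
    obtain ⟨hsub, hcard, hht⟩ := hS
    have hnot : 2 * n - k ∉ S := by
      intro hmem
      have := hsub hmem
      rw [Finset.mem_Icc] at this
      omega
    rw [mem_topSet]
    have hsub' : insert (2 * n - k) S ⊆ Finset.Icc 1 (2 * n - k) := by
      intro x hx
      rw [mem_insert] at hx
      rw [Finset.mem_Icc]
      rcases hx with rfl | hx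
      · omega
      · have := hsub hx; rw [Finset.mem_Icc] at this; omega
    refine ⟨?_, ?_, ?_, ?_, mem_insert_self _ _⟩
    · exact hsub'.trans (Finset.Icc_subset_Icc le_rfl (by omega))
    · rw [card_insert_of_notMem hnot, hcard]; omega
    · intro m hm
      rcases lt_or_ge m (2 * n - k) with hlt | hge
      · rw [ht_insert hlt]
        exact hht m (by omega)
      · rw [ht_of_subset hsub' hge, card_insert_of_notMem hnot, hcard]
        push_cast
        omega
    · intro x hx
      have := hsub' hx
      rw [Finset.mem_Icc] at this
      omega
  · rintro S hS
    rw [mem_topSet] at hS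
    exact Finset.insert_erase hS.2.2.2.2
  · rintro S hS
    rw [mem_goodSet] at hS
    have hnot : 2 * n - k ∉ S := by
      intro hmem
      have := hS.1 hmem
      rw [Finset.mem_Icc] at this
      omega
    exact Finset.erase_insert hnot

section Forward

variable {n : ℕ} {l r : Fin n → ℕ}

lemma pp_l_inj (hP : IsPairPartition n l r) : Function.Injective l :=
  hP.2.1.injective

lemma pp_cardL (hP : IsPairPartition n l r) : (Finset.univ.image l).card = n := by
  rw [Finset.card_image_of_injective _ (pp_l_inj hP), Finset.card_univ, Fintype.card_fin]

lemma pp_card_union (hP : IsPairPartition n l r) :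
    (Finset.univ.image l ∪ Finset.univ.image r).card = 2 * n := by
  rw [hP.2.2, Nat.card_Icc]; omega

lemma pp_cardR (hP : IsPairPartition n l r) : (Finset.univ.image r).card = n := by
  have h1 := pp_card_union hP
  have h2 := Finset.card_union_le (Finset.univ.image l) (Finset.univ.image r)
  have h3 : (Finset.univ.image r).card ≤ n := by
    calc (Finset.univ.image r).card ≤ Finset.univ.card := Finset.card_image_le
    _ = n := by rw [Finset.card_univ, Fintype.card_fin]
  have h4 := pp_cardL hP
  omega

lemma pp_disj (hP : IsPairPartition n l r) :
    Disjoint (Finset.univ.image l) (Finset.univ.image r) := by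
  rw [Finset.disjoint_iff_inter_eq_empty, ← Finset.card_eq_zero]
  have h1 := Finset.card_union_add_card_inter (Finset.univ.image l) (Finset.univ.image r)
  have h2 := pp_card_union hP
  have h3 := pp_cardL hP
  have h4 := pp_cardR hP
  omega

lemma pp_r_inj (hP : IsPairPartition n l r) : Function.Injective r := by
  have hinj := Finset.injOn_of_card_image_eq (f := r) (s := Finset.univ)
    (by rw [pp_cardR hP, Finset.card_univ, Fintype.card_fin])
  intro a b hab
  exact hinj (Finset.mem_coe.mpr (Finset.mem_univ a)) (Finset.mem_coe.mpr (Finset.mem_univ b)) hab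

lemma pp_l_mem (hP : IsPairPartition n l r) (h : Fin n) : l h ∈ Finset.Icc 1 (2 * n) := by
  rw [← hP.2.2]
  exact Finset.mem_union_left _ (Finset.mem_image_of_mem l (Finset.mem_univ h))

lemma pp_r_mem (hP : IsPairPartition n l r) (h : Fin n) : r h ∈ Finset.Icc 1 (2 * n) := by
  rw [← hP.2.2]
  exact Finset.mem_union_right _ (Finset.mem_image_of_mem r (Finset.mem_univ h))

/-- number of `l`-indices with value ≤ m -/
private def cntA (l : Fin n → ℕ) (m : ℕ) : ℕ := (Finset.univ.filter fun g => l g ≤ m).card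

lemma pp_cardL_inter (hP : IsPairPartition n l r) (m : ℕ) :
    (Finset.univ.image l ∩ Finset.Icc 1 m).card = cntA l m := by
  have him : Finset.univ.image l ∩ Finset.Icc 1 m
      = (Finset.univ.filter fun g => l g ≤ m).image l := by
    ext x
    simp only [Finset.mem_inter, Finset.mem_image, Finset.mem_Icc, Finset.mem_filter,
      Finset.mem_univ, true_and]
    constructor
    · rintro ⟨⟨g, _, rfl⟩, _, h2⟩
      exact ⟨g, h2, rfl⟩
    · rintro ⟨g, hg, rfl⟩
      have := pp_l_mem hP g
      rw [Finset.mem_Icc] at this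
      exact ⟨⟨g, rfl⟩, this.1, hg⟩
  rw [him, Finset.card_image_of_injective _ (pp_l_inj hP)]
  rfl

lemma pp_cardR_inter (hP : IsPairPartition n l r) (m : ℕ) :
    (Finset.univ.image r ∩ Finset.Icc 1 m).card = cntA r m := by
  have him : Finset.univ.image r ∩ Finset.Icc 1 m
      = (Finset.univ.filter fun g => r g ≤ m).image r := by
    ext x
    simp only [Finset.mem_inter, Finset.mem_image, Finset.mem_Icc, Finset.mem_filter,
      Finset.mem_univ, true_and]
    constructor
    · rintro ⟨⟨g, _, rfl⟩, _, h2⟩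
      exact ⟨g, h2, rfl⟩
    · rintro ⟨g, hg, rfl⟩
      have := pp_r_mem hP g
      rw [Finset.mem_Icc] at this
      exact ⟨⟨g, rfl⟩, this.1, hg⟩
  rw [him, Finset.card_image_of_injective _ (pp_r_inj hP)]
  rfl

lemma pp_split (hP : IsPairPartition n l r) {m : ℕ} (hm : m ≤ 2 * n) :
    m = cntA l m + cntA r m := by
  have h1 : Finset.Icc 1 m =
      (Finset.univ.image l ∩ Finset.Icc 1 m) ∪ (Finset.univ.image r ∩ Finset.Icc 1 m) := by
    rw [← Finset.union_inter_distrib_right, hP.2.2,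
      Finset.inter_eq_right.mpr (Finset.Icc_subset_Icc le_rfl hm)]
  have h2 : Disjoint (Finset.univ.image l ∩ Finset.Icc 1 m)
      (Finset.univ.image r ∩ Finset.Icc 1 m) :=
    Finset.disjoint_of_subset_left Finset.inter_subset_left
      (Finset.disjoint_of_subset_right Finset.inter_subset_left (pp_disj hP))
  have h3 := congrArg Finset.card h1
  rw [Nat.card_Icc, Finset.card_union_of_disjoint h2, pp_cardL_inter hP, pp_cardR_inter hP] at h3
  omega

lemma pp_ht_eq (hP : IsPairPartition n l r) {m : ℕ} (hm : m ≤ 2 * n) :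
    ht (Finset.univ.image l) m = (cntA l m : ℤ) - cntA r m := by
  unfold ht
  rw [pp_cardL_inter hP]
  have := pp_split hP hm
  push_cast
  omega

lemma cnt_diff (f : Fin n → ℕ) {m' m : ℕ} (hm : m' ≤ m) :
    cntA f m = cntA f m' + (Finset.univ.filter fun g => m' < f g ∧ f g ≤ m).card := by
  unfold cntA
  rw [← Finset.card_union_of_disjoint]
  · congr 1
    ext g
    simp only [Finset.mem_union, Finset.mem_filter, Finset.mem_univ, true_and]
    omega
  · rw [Finset.disjoint_left]
    intro g hg1 hg2
    simp only [Finset.mem_filter, Finset.mem_univ, true_and] at hg1 hg2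
    omega

/-- the main height inequality: heights stay at least `ht (l h)` strictly inside `(l h, r h)`. -/
lemma pp_ht_ge (hP : IsPairPartition n l r) (hNC : IsNonCrossing n l r) (h : Fin n)
    {j : ℕ} (hj1 : l h ≤ j) (hj2 : j < r h) :
    ht (Finset.univ.image l) (l h) ≤ ht (Finset.univ.image l) j := by
  have hr2n := pp_r_mem hP h
  rw [Finset.mem_Icc] at hr2n
  have hl2n := pp_l_mem hP h
  rw [Finset.mem_Icc] at hl2n
  have hj2n : j ≤ 2 * n := by omega
  rw [pp_ht_eq hP hj2n, pp_ht_eq hP (by omega : l h ≤ 2 * n)]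
  have hA := cnt_diff l hj1
  have hB := cnt_diff r hj1
  have hsub : (Finset.univ.filter fun g => l h < r g ∧ r g ≤ j)
      ⊆ (Finset.univ.filter fun g => l h < l g ∧ l g ≤ j) := by
    intro g hg
    simp only [Finset.mem_filter, Finset.mem_univ, true_and] at hg ⊢
    have hlg : l g < r g := hP.1 g
    have hgh : h < g := by
      rcases lt_trichotomy g h with hlt | rfl | hgt
      · exfalso
        have := (hNC g h hlt).mp hg.1
        omega
      · omega
      · exact hgt
    have := hP.2.1 hgh
    constructor <;> omega
  have := Finset.card_le_card hsub
  push_cast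
  omega

/-- height strictly drops at `r h` below its value at `l h`. -/
lemma pp_ht_lt (hP : IsPairPartition n l r) (hNC : IsNonCrossing n l r) (h : Fin n) :
    ht (Finset.univ.image l) (r h) < ht (Finset.univ.image l) (l h) := by
  have hr2n := pp_r_mem hP h
  rw [Finset.mem_Icc] at hr2n
  have hl2n := pp_l_mem hP h
  rw [Finset.mem_Icc] at hl2n
  have hlh : l h < r h := hP.1 h
  rw [pp_ht_eq hP hr2n.2, pp_ht_eq hP (by omega : l h ≤ 2 * n)]
  have hA := cnt_diff l (le_of_lt hlh)
  have hB := cnt_diff r (le_of_lt hlh)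
  have hssub : (Finset.univ.filter fun g => l h < l g ∧ l g ≤ r h)
      ⊂ (Finset.univ.filter fun g => l h < r g ∧ r g ≤ r h) := by
    rw [Finset.ssubset_iff_of_subset]
    · exact ⟨h, by simp only [Finset.mem_filter, Finset.mem_univ, true_and]; omega,
        by simp only [Finset.mem_filter, Finset.mem_univ, true_and]; omega⟩
    · intro g hg
      simp only [Finset.mem_filter, Finset.mem_univ, true_and] at hg ⊢
      have hlg : l g < r g := hP.1 g
      have hne : l g ≠ r h := by
        intro heq
        have : l g ∈ Finset.univ.image l ∩ Finset.univ.image r := by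
          rw [Finset.mem_inter]
          exact ⟨Finset.mem_image_of_mem l (Finset.mem_univ g), heq ▸
            Finset.mem_image_of_mem r (Finset.mem_univ h)⟩
        rw [Finset.disjoint_iff_inter_eq_empty.mp (pp_disj hP)] at this
        exact absurd this (Finset.notMem_empty _)
      have hgh : h < g := by
        rcases lt_trichotomy g h with hlt | rfl | hgt
        · have := hP.2.1 hlt; omega
        · omega
        · exact hgt
      have := (hNC h g hgh).mp (by omega)
      omega
  have := Finset.card_lt_card hssub
  push_cast
  omega

/-- uniqueness of the matching: two non-crossing pair partitions with the same `l` coincide. -/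
lemma pp_unique (hP : IsPairPartition n l r) (hNC : IsNonCrossing n l r)
    {r' : Fin n → ℕ} (hP' : IsPairPartition n l r') (hNC' : IsNonCrossing n l r') : r = r' := by
  funext h
  by_contra hne
  rcases lt_trichotomy (r h) (r' h) with hlt | heq | hgt
  · have h1 := pp_ht_ge hP' hNC' h (le_of_lt (hP.1 h)) hlt
    have h2 := pp_ht_lt hP hNC h
    omega
  · exact hne heq
  · have h1 := pp_ht_ge hP hNC h (le_of_lt (hP'.1 h)) hgt
    have h2 := pp_ht_lt hP' hNC' h
    omega

/-- the left-endpoint set of a non-crossing pair partition lies in `topSet`. -/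
lemma pp_mem_topSet (hn : 0 < n) {k : ℕ} (hP : IsPairPartition n l r)
    (hNC : IsNonCrossing n l r)
    (hk : 2 * n - l ⟨n - 1, Nat.sub_lt hn one_pos⟩ = k) :
    Finset.univ.image l ∈ topSet n k := by
  have hmax : ∀ h : Fin n, l h ≤ l ⟨n - 1, Nat.sub_lt hn one_pos⟩ := by
    intro h
    apply hP.2.1.monotone
    have := h.2
    exact Fin.mk_le_mk.mpr (by omega) |>.trans (le_refl _) |>.trans_eq rfl
  have hl2n := pp_l_mem hP ⟨n - 1, Nat.sub_lt hn one_pos⟩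
  rw [Finset.mem_Icc] at hl2n
  have hlval : l ⟨n - 1, Nat.sub_lt hn one_pos⟩ = 2 * n - k := by omega
  rw [mem_topSet]
  refine ⟨?_, pp_cardL hP, ?_, ?_, ?_⟩
  · intro x hx
    rw [Finset.mem_image] at hx
    obtain ⟨g, _, rfl⟩ := hx
    exact pp_l_mem hP g
  · intro m hm
    rw [pp_ht_eq hP hm]
    have hsub : (Finset.univ.filter fun g => r g ≤ m)
        ⊆ (Finset.univ.filter fun g => l g ≤ m) := by
      intro g hg
      simp only [Finset.mem_filter, Finset.mem_univ, true_and] at hg ⊢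
      have := hP.1 g
      omega
    have := Finset.card_le_card hsub
    unfold cntA
    push_cast
    omega
  · intro x hx
    rw [Finset.mem_image] at hx
    obtain ⟨g, _, rfl⟩ := hx
    rw [← hlval]
    exact hmax g
  · rw [← hlval]
    exact Finset.mem_image_of_mem l (Finset.mem_univ _)

end Forward

section Construction

/-- stack matching: the first place after `i` where the height drops below `ht S i`. -/
noncomputable def mtch (S : Finset ℕ) (i : ℕ) : ℕ := sInf {j | i < j ∧ ht S j < ht S i}

variable {n : ℕ} {S : Finset ℕ}

lemma ht_mem_pos (hsub : S ⊆ Finset.Icc 1 (2 * n)) (hht : ∀ m ≤ 2 * n, 0 ≤ ht S m)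
    {i : ℕ} (hi : i ∈ S) : 1 ≤ ht S i := by
  have hiIcc := hsub hi
  rw [Finset.mem_Icc] at hiIcc
  obtain ⟨m, rfl⟩ : ∃ m, i = m + 1 := ⟨i - 1, by omega⟩
  rw [ht_succ, if_pos hi]
  have := hht m (by omega)
  omega

lemma ht_top (hsub : S ⊆ Finset.Icc 1 (2 * n)) (hcard : S.card = n) : ht S (2 * n) = 0 := by
  rw [ht_of_subset hsub le_rfl, hcard]
  push_cast
  omega

lemma mtch_nonempty (hsub : S ⊆ Finset.Icc 1 (2 * n)) (hcard : S.card = n)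
    (hht : ∀ m ≤ 2 * n, 0 ≤ ht S m) {i : ℕ} (hi : i ∈ S) :
    2 * n ∈ {j | i < j ∧ ht S j < ht S i} := by
  have h1 := ht_mem_pos hsub hht hi
  have h2 := ht_top hsub hcard
  have hiIcc := hsub hi
  rw [Finset.mem_Icc] at hiIcc
  have : i ≠ 2 * n := by
    intro heq
    rw [heq] at h1
    omega
  exact ⟨by omega, by omega⟩

lemma mtch_spec (hsub : S ⊆ Finset.Icc 1 (2 * n)) (hcard : S.card = n)
    (hht : ∀ m ≤ 2 * n, 0 ≤ ht S m) {i : ℕ} (hi : i ∈ S) :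
    i < mtch S i ∧ ht S (mtch S i) < ht S i :=
  Nat.sInf_mem ⟨2 * n, mtch_nonempty hsub hcard hht hi⟩

lemma mtch_le (hsub : S ⊆ Finset.Icc 1 (2 * n)) (hcard : S.card = n)
    (hht : ∀ m ≤ 2 * n, 0 ≤ ht S m) {i : ℕ} (hi : i ∈ S) :
    mtch S i ≤ 2 * n :=
  Nat.sInf_le (mtch_nonempty hsub hcard hht hi)

lemma mtch_min {i j : ℕ} (hij : i ≤ j) (hj : j < mtch S i) : ht S i ≤ ht S j := by
  rcases eq_or_lt_of_le hij with rfl | hlt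
  · exact le_refl _
  · have := Nat.notMem_of_lt_sInf (by exact hj : j < sInf {j | i < j ∧ ht S j < ht S i})
    simp only [Set.mem_setOf_eq, not_and, not_lt] at this
    exact this hlt

lemma mtch_ht (hsub : S ⊆ Finset.Icc 1 (2 * n)) (hcard : S.card = n)
    (hht : ∀ m ≤ 2 * n, 0 ≤ ht S m) {i : ℕ} (hi : i ∈ S) :
    ht S (mtch S i) = ht S i - 1 ∧ mtch S i ∉ S := by
  obtain ⟨hgt, hdrop⟩ := mtch_spec hsub hcard hht hi
  obtain ⟨m, hm⟩ : ∃ m, mtch S i = m + 1 := ⟨mtch S i - 1, by omega⟩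
  have hmge : ht S i ≤ ht S m := mtch_min (by omega) (by omega)
  rw [hm, ht_succ] at hdrop ⊢
  by_cases hmem : m + 1 ∈ S
  · rw [if_pos hmem] at hdrop
    exact (by omega : False).elim
  · rw [if_neg hmem] at hdrop ⊢
    exact ⟨by omega, hmem⟩

lemma mtch_ne (hsub : S ⊆ Finset.Icc 1 (2 * n)) (hcard : S.card = n)
    (hht : ∀ m ≤ 2 * n, 0 ≤ ht S m) {i i' : ℕ} (hi : i ∈ S) (hi' : i' ∈ S)
    (hlt : i < i') : mtch S i ≠ mtch S i' := by
  intro heq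
  obtain ⟨hgt, _⟩ := mtch_spec hsub hcard hht hi
  obtain ⟨hgt', _⟩ := mtch_spec hsub hcard hht hi'
  have hdrop := (mtch_ht hsub hcard hht hi).1
  have hdrop' := (mtch_ht hsub hcard hht hi').1
  rw [heq] at hdrop
  have heqht : ht S i = ht S i' := by omega
  have hi'lt : i' < mtch S i := heq ▸ hgt'
  obtain ⟨m, hm⟩ : ∃ m, i' = m + 1 := ⟨i' - 1, by omega⟩
  have hstep : ht S i' = ht S m + 1 := by rw [hm, ht_succ, if_pos (hm ▸ hi')]
  have : ht S i ≤ ht S m := mtch_min (by omega) (by omega)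
  omega

lemma mtch_noncross (hsub : S ⊆ Finset.Icc 1 (2 * n)) (hcard : S.card = n)
    (hht : ∀ m ≤ 2 * n, 0 ≤ ht S m) {i i' : ℕ} (hi : i ∈ S) (hi' : i' ∈ S)
    (hlt : i < i') (hin : i' < mtch S i) : mtch S i' < mtch S i := by
  have h1 : ht S i ≤ ht S i' := mtch_min (le_of_lt hlt) hin
  have hdrop := (mtch_ht hsub hcard hht hi).1
  have hle : mtch S i' ≤ mtch S i :=
    Nat.sInf_le ⟨hin, by omega⟩
  have hne := mtch_ne hsub hcard hht hi hi' hlt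
  omega

end Construction

section Assembly

lemma build {n k : ℕ} (hn : 0 < n) (hk1 : 1 ≤ k) (hk2 : k ≤ n) {S : Finset ℕ}
    (hS : S ∈ topSet n k) :
    ∃ p : (Fin n → ℕ) × (Fin n → ℕ),
      (IsPairPartition n p.1 p.2 ∧ IsNonCrossing n p.1 p.2 ∧
        2 * n - p.1 ⟨n - 1, Nat.sub_lt hn one_pos⟩ = k) ∧ Finset.univ.image p.1 = S := by
  rw [mem_topSet] at hS
  obtain ⟨hsub, hcard, hht, hmax, hmem⟩ := hS
  set l : Fin n → ℕ := ⇑(S.orderEmbOfFin hcard) with hl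
  set r : Fin n → ℕ := fun h => mtch S (l h) with hr
  have hlmem : ∀ h, l h ∈ S := fun h => Finset.orderEmbOfFin_mem S hcard h
  have hl1 : ∀ h, 1 ≤ l h := by
    intro h
    have := hsub (hlmem h)
    rw [Finset.mem_Icc] at this
    exact this.1
  have hlr : ∀ h, l h < r h := fun h => (mtch_spec hsub hcard hht (hlmem h)).1
  have hmono : StrictMono l := (S.orderEmbOfFin hcard).strictMono
  have himg : Finset.univ.image l = S := by
    ext x
    simp only [Finset.mem_image, Finset.mem_univ, true_and]
    constructor
    · rintro ⟨g, rfl⟩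
      exact hlmem g
    · intro hx
      have : x ∈ Set.range l := by
        rw [hl, Finset.range_orderEmbOfFin]
        exact hx
    
      exact this
  have hrinj : Function.Injective r := by
    intro a b hab
    by_contra hne
    rcases lt_trichotomy a b with hlt | heq | hgt
    · exact mtch_ne hsub hcard hht (hlmem a) (hlmem b) (hmono hlt) hab
    · exact hne heq
    · exact mtch_ne hsub hcard hht (hlmem b) (hlmem a) (hmono hgt) hab.symm
  have hrsub : Finset.univ.image r ⊆ Finset.Icc 1 (2 * n) \ S := by
    intro x hx
    rw [Finset.mem_image] at hx
    obtain ⟨g, _, rfl⟩ := hx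
    rw [Finset.mem_sdiff, Finset.mem_Icc]
    refine ⟨⟨?_, mtch_le hsub hcard hht (hlmem g)⟩, (mtch_ht hsub hcard hht (hlmem g)).2⟩
    have := hl1 g
    have := hlr g
    omega
  have hrimg : Finset.univ.image r = Finset.Icc 1 (2 * n) \ S := by
    apply Finset.eq_of_subset_of_card_le hrsub
    rw [Finset.card_sdiff_of_subset hsub, Nat.card_Icc, hcard,
      Finset.card_image_of_injective _ hrinj, Finset.card_univ, Fintype.card_fin]
    omega
  have hP : IsPairPartition n l r := by
    refine ⟨hlr, hmono, ?_⟩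
    rw [himg, hrimg, Finset.union_sdiff_of_subset hsub]
  have hNC : IsNonCrossing n l r := by
    intro h h' hlt
    have hll : l h < l h' := hmono hlt
    constructor
    · intro hin
      exact mtch_noncross hsub hcard hht (hlmem h) (hlmem h') hll hin
    · intro hin
      exact lt_trans (hlr h') hin
  have hlast : l ⟨n - 1, Nat.sub_lt hn one_pos⟩ = 2 * n - k := by
    have hnz : S.Nonempty := ⟨2 * n - k, hmem⟩
    have := Finset.orderEmbOfFin_last hcard hn
    rw [hl]
    rw [this]
    exact le_antisymm (Finset.max'_le _ _ _ hmax) (Finset.le_max' _ _ hmem)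
  exact ⟨(l, r), ⟨hP, hNC, by show 2 * n - l ⟨n - 1, Nat.sub_lt hn one_pos⟩ = k; rw [hlast]; omega⟩, himg⟩

end Assembly

theorem stmt_15 (n k : ℕ) (hn : 0 < n) (hk1 : 1 ≤ k) (hk2 : k ≤ n) :
    Nat.card {p : (Fin n → ℕ) × (Fin n → ℕ) //
        IsPairPartition n p.1 p.2 ∧ IsNonCrossing n p.1 p.2 ∧
        2 * n - p.1 ⟨n - 1, Nat.sub_lt hn one_pos⟩ = k} =
      catalanTriangle (n - 1) (n - k) ∧
    catalanTriangle (n - 1) (n - k) = k * (2 * n - k - 1).choose (n - 1) / n := by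
  constructor
  · -- counting
    set T := {p : (Fin n → ℕ) × (Fin n → ℕ) //
        IsPairPartition n p.1 p.2 ∧ IsNonCrossing n p.1 p.2 ∧
        2 * n - p.1 ⟨n - 1, Nat.sub_lt hn one_pos⟩ = k} with hT
    let F : T → {S : Finset ℕ // S ∈ topSet n k} := fun p =>
      ⟨Finset.univ.image p.1.1, pp_mem_topSet hn p.2.1 p.2.2.1 p.2.2.2⟩
    have hFinj : Function.Injective F := by
      rintro ⟨⟨lp, rp⟩, hPp, hNCp, hkp⟩ ⟨⟨lq, rq⟩, hPq, hNCq, hkq⟩ hFeq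
      have himg : Finset.univ.image lp = Finset.univ.image lq := by
        have := congrArg Subtype.val hFeq
        exact this
      have hll : lp = lq := by
        have h1 : lp = (Finset.univ.image lq).orderEmbOfFin
            (by rw [← himg]; exact pp_cardL hPp) := by
          apply Finset.orderEmbOfFin_unique
          · intro x
            rw [← himg]
            exact Finset.mem_image_of_mem lp (Finset.mem_univ x)
          · exact hPp.2.1
        have h2 : lq = (Finset.univ.image lq).orderEmbOfFin (pp_cardL hPq) := by
          apply Finset.orderEmbOfFin_unique
          · intro x
            exact Finset.mem_image_of_mem lq (Finset.mem_univ x)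
          · exact hPq.2.1
        rw [h1]; exact h2.symm
      subst hll
      have hrr : rp = rq := pp_unique hPp hNCp hPq hNCq
      subst hrr
      rfl
    have hFsurj : Function.Surjective F := by
      rintro ⟨S, hS⟩
      obtain ⟨p, hprop, himg⟩ := build hn hk1 hk2 hS
      exact ⟨⟨p, hprop⟩, Subtype.ext himg⟩
    have h1 : Nat.card T = Nat.card {S : Finset ℕ // S ∈ topSet n k} :=
      Nat.card_congr (Equiv.ofBijective F ⟨hFinj, hFsurj⟩)
    rw [h1]
    have h2 : Nat.card {S : Finset ℕ // S ∈ topSet n k} = (topSet n k).card :=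
      Nat.card_eq_finsetCard (topSet n k)
    rw [h2, topSet_card hn hk1 hk2, goodSet_card]
  · -- arithmetic
    unfold catalanTriangle
    rw [show n - 1 + 1 - (n - k) = k by omega, show n - 1 + (n - k) = 2 * n - k - 1 by omega,
      show n - 1 + 1 = n by omega]
    congr 2
    rw [show n - k = 2 * n - k - 1 - (n - 1) by omega, Nat.choose_symm (by omega)]
end

section
/- For n > 2 and 2 ≤ k ≤ n-1, the number of non-crossing pair partitions of {1,...,2n} with largest left index l_n = 2n-k equals Σ_{h=k-1}^{n-1} |NCPP_h(2n-2)|, where NCPP_h(2m) is the set of non-crossing pair partitions of {1,...,2m} with largest left index 2m-h. -/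
/-- The number of non-crossing pair partitions of `{1,...,2n}` whose largest
left index `lₙ` satisfies `2n - lₙ = k`. -/
noncomputable def NCPPcard (n k : ℕ) : ℕ :=
  Nat.card {p : (Fin n → ℕ) × (Fin n → ℕ) //
    IsPairPartition n p.1 p.2 ∧ IsNonCrossing n p.1 p.2 ∧
    ∃ h : Fin n, (∀ h' : Fin n, p.1 h' ≤ p.1 h) ∧ 2 * n - p.1 h = k}

/-!
In a non-crossing pair partition of `{1,...,2n}` the pair with the largest left end
`a = lₙ` is `(a, a + 1)`. Deleting it and closing the gap gives a non-crossing pair partition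
of `{1,...,2n-2}` all of whose left ends are `< a`; conversely, opening a gap at `a` in such
a partition and inserting `(a, a + 1)` undoes this. For `a = 2n - k` the condition
`l'ₙ₋₁ < a` reads `h := 2n - 2 - l'ₙ₋₁ ≥ k - 1`, and `h ≤ n - 1` holds always because
`l'ₙ₋₁ ≥ n - 1`.
-/

open Finset

def NCPP (n : ℕ) : Set ((Fin n → ℕ) × (Fin n → ℕ)) :=
  {p | IsPairPartition n p.1 p.2 ∧ IsNonCrossing n p.1 p.2}

namespace IsPairPartition

variable {n : ℕ} {l r : Fin n → ℕ}

theorem left_mem_Icc (hp : IsPairPartition n l r) (i : Fin n) : l i ∈ Icc 1 (2 * n) :=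
  hp.2.2 ▸ mem_union_left _ (mem_image_of_mem l (mem_univ i))

theorem right_mem_Icc (hp : IsPairPartition n l r) (i : Fin n) : r i ∈ Icc 1 (2 * n) :=
  hp.2.2 ▸ mem_union_right _ (mem_image_of_mem r (mem_univ i))

theorem exists_eq_of_mem_Icc (hp : IsPairPartition n l r) {x : ℕ} (hx : x ∈ Icc 1 (2 * n)) :
    (∃ i, l i = x) ∨ ∃ i, r i = x := by
  simpa [← hp.2.2] using hx

theorem of_cover (hlr : ∀ i, l i < r i) (hl : StrictMono l)
    (hbound : ∀ i, 1 ≤ l i ∧ r i ≤ 2 * n)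
    (hcover : ∀ x ∈ Icc 1 (2 * n), (∃ i, l i = x) ∨ ∃ i, r i = x) :
    IsPairPartition n l r := by
  refine ⟨hlr, hl, Finset.ext fun x => ⟨fun hx => ?_, fun hx => by simpa using hcover x hx⟩⟩
  rcases mem_union.mp hx with hx | hx <;> obtain ⟨i, -, rfl⟩ := mem_image.mp hx <;>
    have := hbound i <;> have := hlr i <;> exact mem_Icc.mpr ⟨by omega, by omega⟩

/-- `n` left ends and `n` right ends fill the `2n` points, so the two images are disjoint and
`r` is injective. -/
theorem injective_right_and_left_ne_right (hp : IsPairPartition n l r) :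
    Function.Injective r ∧ ∀ i j, l i ≠ r j := by
  have hcard := card_union_add_card_inter (univ.image l) (univ.image r)
  rw [hp.2.2, Nat.card_Icc, card_image_of_injective _ hp.2.1.injective, card_univ,
    Fintype.card_fin] at hcard
  have hr : (univ.image r).card ≤ n := card_image_le.trans (by simp)
  refine ⟨fun i j hij => ?_, fun i j hij => ?_⟩
  · have hinj : Set.InjOn r (univ : Finset (Fin n)) :=
      card_image_iff.mp (by simp only [card_univ, Fintype.card_fin]; omega)
    exact hinj (mem_coe.mpr (mem_univ i)) (mem_coe.mpr (mem_univ j)) hij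
  · have hinter : univ.image l ∩ univ.image r = ∅ := card_eq_zero.mp (by omega)
    have hmem : l i ∈ univ.image l ∩ univ.image r :=
      mem_inter.mpr ⟨mem_image_of_mem l (mem_univ i), hij ▸ mem_image_of_mem r (mem_univ j)⟩
    simp [hinter] at hmem

theorem succ_le_left_last {m : ℕ} {l r : Fin (m + 1) → ℕ} (hp : IsPairPartition (m + 1) l r) :
    m + 1 ≤ l (Fin.last m) := by
  have hsub : univ.image l ⊆ Icc 1 (l (Fin.last m)) := by
    intro x hx
    obtain ⟨i, -, rfl⟩ := mem_image.mp hx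
    exact mem_Icc.mpr ⟨(mem_Icc.mp (hp.left_mem_Icc i)).1, hp.2.1.monotone (Fin.le_last i)⟩
  simpa [card_image_of_injective _ hp.2.1.injective] using card_le_card hsub

/-- The last left end is followed by its own right end: anything in between would have to be
the right end of an earlier pair, which would cross the last one. -/
theorem right_last_eq {m : ℕ} {l r : Fin (m + 1) → ℕ} (hp : IsPairPartition (m + 1) l r)
    (hnc : IsNonCrossing (m + 1) l r) : r (Fin.last m) = l (Fin.last m) + 1 := by
  have hlast := hp.1 (Fin.last m)
  have hr := mem_Icc.mp (hp.right_mem_Icc (Fin.last m))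
  rcases hp.exists_eq_of_mem_Icc (x := l (Fin.last m) + 1) (mem_Icc.mpr ⟨by omega, by omega⟩)
    with ⟨j, hj⟩ | ⟨j, hj⟩
  · have := hp.2.1.monotone (Fin.le_last j)
    omega
  · obtain ⟨j, rfl⟩ | rfl := Fin.eq_castSucc_or_eq_last j
    · have := hnc _ _ (Fin.castSucc_lt_last j)
      omega
    · exact hj

theorem right_castSucc_lt_or_add_two_le {m : ℕ} {l r : Fin (m + 1) → ℕ}
    (hp : IsPairPartition (m + 1) l r) (hnc : IsNonCrossing (m + 1) l r) (i : Fin m) :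
    r i.castSucc < l (Fin.last m) ∨ l (Fin.last m) + 2 ≤ r i.castSucc := by
  obtain ⟨hinj, hne⟩ := hp.injective_right_and_left_ne_right
  have h₁ := hne (Fin.last m) i.castSucc
  have h₂ : r i.castSucc ≠ r (Fin.last m) := hinj.ne (Fin.castSucc_lt_last i).ne
  rw [hp.right_last_eq hnc] at h₂
  omega

end IsPairPartition

theorem exists_max_sub_eq_iff {m c k : ℕ} {l : Fin (m + 1) → ℕ} (hl : Monotone l) :
    (∃ h, (∀ h', l h' ≤ l h) ∧ c - l h = k) ↔ c - l (Fin.last m) = k := by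
  refine ⟨fun ⟨h, hmax, hk⟩ => ?_, fun hk => ⟨Fin.last m, fun h' => hl (Fin.le_last h'), hk⟩⟩
  rwa [le_antisymm (hl (Fin.le_last h)) (hmax _)] at hk

instance (n : ℕ) : Finite (NCPP n) :=
  have hfin := Set.Finite.pi fun (_ : Fin n) => Set.finite_Icc 1 (2 * n)
  Set.Finite.to_subtype <| (hfin.prod hfin).subset fun _ hp =>
    ⟨fun i _ => Set.mem_Icc.mpr (mem_Icc.mp (hp.1.left_mem_Icc i)),
      fun i _ => Set.mem_Icc.mpr (mem_Icc.mp (hp.1.right_mem_Icc i))⟩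

def closeGap (a x : ℕ) : ℕ := if x < a then x else x - 2

def openGap (a x : ℕ) : ℕ := if x < a then x else x + 2

theorem closeGap_openGap (a x : ℕ) : closeGap a (openGap a x) = x := by
  unfold closeGap openGap; split_ifs <;> omega

theorem openGap_closeGap {a x : ℕ} (hx : x < a ∨ a + 2 ≤ x) : openGap a (closeGap a x) = x := by
  unfold closeGap openGap; split_ifs <;> omega

section LastPair

variable {m : ℕ}

def eraseLastPair (p : (Fin (m + 1) → ℕ) × (Fin (m + 1) → ℕ)) : (Fin m → ℕ) × (Fin m → ℕ) :=
  (fun i => p.1 i.castSucc, fun i => closeGap (p.1 (Fin.last m)) (p.2 i.castSucc))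

def snocPair (a : ℕ) (q : (Fin m → ℕ) × (Fin m → ℕ)) : (Fin (m + 1) → ℕ) × (Fin (m + 1) → ℕ) :=
  (Fin.snoc q.1 a, Fin.snoc (openGap a ∘ q.2) (a + 1))

theorem eraseLastPair_snocPair (a : ℕ) (q : (Fin m → ℕ) × (Fin m → ℕ)) :
    eraseLastPair (snocPair a q) = q := by
  ext i <;> simp [eraseLastPair, snocPair, closeGap_openGap]

theorem snocPair_eraseLastPair {p : (Fin (m + 1) → ℕ) × (Fin (m + 1) → ℕ)}
    (hp : p ∈ NCPP (m + 1)) :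
    snocPair (p.1 (Fin.last m)) (eraseLastPair p) = p := by
  obtain ⟨l, r⟩ := p
  obtain ⟨hpp, hnc⟩ := hp
  dsimp only at hpp hnc
  refine Prod.ext (funext fun i => ?_) (funext fun i => ?_) <;>
    induction i using Fin.lastCases
  · simp [snocPair]
  · simp [snocPair, eraseLastPair]
  · simpa [snocPair] using (hpp.right_last_eq hnc).symm
  · simp [snocPair, eraseLastPair,
      openGap_closeGap (hpp.right_castSucc_lt_or_add_two_le hnc _)]

theorem eraseLastPair_mem {p : (Fin (m + 1) → ℕ) × (Fin (m + 1) → ℕ)}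
    (hp : p ∈ NCPP (m + 1)) :
    eraseLastPair p ∈ NCPP m := by
  obtain ⟨l, r⟩ := p
  obtain ⟨hpp, hnc⟩ := hp
  dsimp only at hpp hnc
  set a := l (Fin.last m)
  have hl (i : Fin m) : l i.castSucc < a := hpp.2.1 (Fin.castSucc_lt_last i)
  have hr := hpp.right_castSucc_lt_or_add_two_le hnc
  have hra : r (Fin.last m) = a + 1 := hpp.right_last_eq hnc
  have ha : a + 1 ≤ 2 * (m + 1) := hra ▸ (mem_Icc.mp (hpp.right_mem_Icc _)).2
  change IsPairPartition m (fun i => l i.castSucc) (fun i => closeGap a (r i.castSucc)) ∧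
    IsNonCrossing m (fun i => l i.castSucc) (fun i => closeGap a (r i.castSucc))
  refine ⟨.of_cover (fun i => ?_) (hpp.2.1.comp (Fin.strictMono_castSucc)) (fun i => ?_)
    (fun x hx => ?_), fun i j hij => ?_⟩
  · have := hpp.1 i.castSucc
    have := hl i
    have := hr i
    unfold closeGap; split_ifs <;> omega
  · have := mem_Icc.mp (hpp.left_mem_Icc i.castSucc)
    have := mem_Icc.mp (hpp.right_mem_Icc i.castSucc)
    have := hl i
    have := hr i
    unfold closeGap; split_ifs <;> omega
  · have hx := mem_Icc.mp hx
    rcases hpp.exists_eq_of_mem_Icc (x := openGap a x)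
      (mem_Icc.mpr (by unfold openGap; split_ifs <;> omega)) with ⟨j, hj⟩ | ⟨j, hj⟩ <;>
      obtain ⟨j, rfl⟩ | rfl := Fin.eq_castSucc_or_eq_last j
    · have := hl j
      exact .inl ⟨j, by unfold openGap at hj; split_ifs at hj <;> omega⟩
    · unfold openGap at hj; split_ifs at hj <;> omega
    · exact .inr ⟨j, by rw [hj, closeGap_openGap]⟩
    · unfold openGap at hj; split_ifs at hj <;> omega
  · have := hnc _ _ (Fin.castSucc_lt_castSucc_iff.mpr hij)
    have := hl j
    have := hr i
    have := hr j
    dsimp only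
    unfold closeGap; split_ifs <;> omega

theorem snocPair_mem {a : ℕ} {q : (Fin m → ℕ) × (Fin m → ℕ)} (hq : q ∈ NCPP m)
    (hlt : ∀ i, q.1 i < a) (ha₁ : 1 ≤ a) (ha₂ : a ≤ 2 * m + 1) :
    snocPair a q ∈ NCPP (m + 1) := by
  obtain ⟨l, r⟩ := q
  obtain ⟨hpp, hnc⟩ := hq
  dsimp only at hpp hnc hlt
  simp only [snocPair, NCPP, Set.mem_ofPred_eq]
  refine ⟨.of_cover (fun i => ?_) (fun i j hij => ?_) (fun i => ?_) (fun x hx => ?_),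
    fun i j hij => ?_⟩
  · induction i using Fin.lastCases with
    | last => simp
    | cast i =>
      have := hpp.1 i
      simp only [Fin.snoc_castSucc, Function.comp_apply, openGap]
      split_ifs <;> omega
  · obtain ⟨i, rfl⟩ := Fin.exists_castSucc_eq.mpr (Fin.ne_last_of_lt hij)
    induction j using Fin.lastCases with
    | last => simpa using hlt i
    | cast j => simpa using hpp.2.1 (Fin.castSucc_lt_castSucc_iff.mp hij)
  · induction i using Fin.lastCases with
    | last => simp only [Fin.snoc_last]; omega
    | cast i =>
      have := mem_Icc.mp (hpp.left_mem_Icc i)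
      have := mem_Icc.mp (hpp.right_mem_Icc i)
      simp only [Fin.snoc_castSucc, Function.comp_apply, openGap]
      split_ifs <;> omega
  · have hx := mem_Icc.mp hx
    by_cases hxa : x = a ∨ x = a + 1
    · rcases hxa with rfl | rfl
      · exact .inl ⟨Fin.last m, by simp⟩
      · exact .inr ⟨Fin.last m, by simp⟩
    rcases hpp.exists_eq_of_mem_Icc (x := closeGap a x)
      (mem_Icc.mpr (by unfold closeGap; split_ifs <;> omega)) with ⟨j, hj⟩ | ⟨j, hj⟩
    · have := hlt j
      refine .inl ⟨j.castSucc, ?_⟩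
      simp only [Fin.snoc_castSucc]
      unfold closeGap at hj; split_ifs at hj <;> omega
    · refine .inr ⟨j.castSucc, ?_⟩
      simp only [Fin.snoc_castSucc, Function.comp_apply, hj, openGap, closeGap]
      split_ifs <;> omega
  · obtain ⟨i, rfl⟩ := Fin.exists_castSucc_eq.mpr (Fin.ne_last_of_lt hij)
    induction j using Fin.lastCases with
    | last =>
      simp only [Fin.snoc_castSucc, Fin.snoc_last, Function.comp_apply, openGap]
      split_ifs <;> omega
    | cast j =>
      have := hnc _ _ (Fin.castSucc_lt_castSucc_iff.mp hij)
      have := hlt j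
      simp only [Fin.snoc_castSucc, Function.comp_apply, openGap]
      split_ifs <;> omega

def eraseLastPairEquiv {a : ℕ} (ha₁ : 1 ≤ a) (ha₂ : a ≤ 2 * m + 1) :
    {p : NCPP (m + 1) // p.1.1 (Fin.last m) = a} ≃ {q : NCPP m // ∀ i, q.1.1 i < a} where
  toFun p := ⟨⟨eraseLastPair p.1.1, eraseLastPair_mem p.1.2⟩,
    fun i => (p.1.2.1.2.1 (Fin.castSucc_lt_last i)).trans_eq p.2⟩
  invFun q := ⟨⟨snocPair a q.1.1, snocPair_mem q.1.2 q.2 ha₁ ha₂⟩, by simp [snocPair]⟩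
  left_inv := by
    rintro ⟨⟨p, hp⟩, rfl⟩
    exact Subtype.ext (Subtype.ext (snocPair_eraseLastPair hp))
  right_inv q := Subtype.ext (Subtype.ext (eraseLastPair_snocPair a q.1.1))

end LastPair

theorem Nat.card_subtype_mem_finset_eq_sum {α β : Type*} [Finite α] (f : α → β)
    (s : Finset β) :
    Nat.card {x // f x ∈ s} = ∑ b ∈ s, Nat.card {x // f x = b} := by
  rw [← Nat.card_congr (Equiv.sigmaSubtypeFiberEquivSubtype f fun _ => Iff.rfl), Nat.card_sigma,
    Finset.sum_coe_sort s fun b => Nat.card {x // f x = b}]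

theorem NCPPcard_succ (m k : ℕ) :
    NCPPcard (m + 1) k = Nat.card {p : NCPP (m + 1) // 2 * (m + 1) - p.1.1 (Fin.last m) = k} :=
  Nat.card_congr <| (Equiv.subtypeEquivRight fun _ => and_assoc.symm.trans <|
    and_congr_right fun hp => exists_max_sub_eq_iff hp.1.2.1.monotone).trans
    (Equiv.subtypeSubtypeEquivSubtypeInter (· ∈ NCPP (m + 1))
      fun p => 2 * (m + 1) - p.1 (Fin.last m) = k).symm

theorem NCPPcard_add_two (M k : ℕ) (hk₁ : 1 ≤ k) (hk₂ : k ≤ 2 * M + 3) :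
    NCPPcard (M + 2) k = ∑ h ∈ Icc (k - 1) (M + 1), NCPPcard (M + 1) h := by
  set a := 2 * (M + 2) - k
  calc NCPPcard (M + 2) k
      = Nat.card {p : NCPP (M + 2) // p.1.1 (Fin.last _) = a} := by
        rw [NCPPcard_succ]
        refine Nat.card_congr (Equiv.subtypeEquivRight fun p => ?_)
        have := mem_Icc.mp (p.2.1.left_mem_Icc (Fin.last _))
        omega
    _ = Nat.card {q : NCPP (M + 1) // ∀ i, q.1.1 i < a} :=
        Nat.card_congr (eraseLastPairEquiv (by omega) (by omega))
    _ = Nat.card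
          {q : NCPP (M + 1) // 2 * (M + 1) - q.1.1 (Fin.last M) ∈ Icc (k - 1) (M + 1)} := by
        refine Nat.card_congr (Equiv.subtypeEquivRight fun q => ?_)
        have hmono := q.2.1.2.1.monotone
        have := q.2.1.succ_le_left_last
        have := mem_Icc.mp (q.2.1.left_mem_Icc (Fin.last M))
        rw [mem_Icc]
        exact ⟨fun h => by have := h (Fin.last M); omega,
          fun h i => (hmono (Fin.le_last i)).trans_lt (by omega)⟩
    _ = ∑ h ∈ Icc (k - 1) (M + 1), NCPPcard (M + 1) h := by
        simp only [Nat.card_subtype_mem_finset_eq_sum, NCPPcard_succ]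

theorem stmt_16_general (n k : ℕ) (hk1 : 2 ≤ k) (hk2 : k ≤ n - 1) :
    NCPPcard n k = ∑ h ∈ Finset.Icc (k - 1) (n - 1), NCPPcard (n - 1) h := by
  obtain ⟨M, rfl⟩ : ∃ M, n = M + 2 := ⟨n - 2, by omega⟩
  exact NCPPcard_add_two M k (by omega) (by omega)

theorem stmt_16 (n k : ℕ) (hn : 2 < n) (hk1 : 2 ≤ k) (hk2 : k ≤ n - 1) :
    NCPPcard n k = ∑ h ∈ Finset.Icc (k - 1) (n - 1), NCPPcard (n - 1) h :=
  stmt_16_general n k hk1 hk2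
end

section
/- For every n ∈ ℕ*, the set of non-crossing pair partitions of {1,...,2n} whose largest left index equals n (i.e. 2n - l_n = n) consists exactly of the single partition {(h, 2n+1-h)}_{h=1}^n, while the set of all pair partitions with l_n = n has cardinality n!. -/
lemma gap_mono {n : ℕ} {f : Fin n → ℕ} (hf : StrictMono f) :
    ∀ i j : Fin n, i.val ≤ j.val → f i + (j.val - i.val) ≤ f j := by
  have key : ∀ d : ℕ, ∀ i j : Fin n, j.val = i.val + d → f i + d ≤ f j := by
    intro d
    induction d with
    | zero =>
      intro i j h
      have : i = j := Fin.ext (by omega)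
      simp [this]
    | succ d ih =>
      intro i j h
      have hj' : i.val + d < n := lt_of_le_of_lt (by omega) j.isLt
      have h1 := ih i ⟨i.val + d, hj'⟩ rfl
      have h2 : f ⟨i.val + d, hj'⟩ < f j := hf (by simp [Fin.lt_def]; omega)
      omega
  intro i j hij
  exact key (j.val - i.val) i j (by omega)

lemma gap_anti {n : ℕ} {f : Fin n → ℕ} (hf : StrictAnti f) :
    ∀ i j : Fin n, i.val ≤ j.val → f j + (j.val - i.val) ≤ f i := by
  have key : ∀ d : ℕ, ∀ i j : Fin n, j.val = i.val + d → f j + d ≤ f i := by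
    intro d
    induction d with
    | zero =>
      intro i j h
      have : i = j := Fin.ext (by omega)
      simp [this]
    | succ d ih =>
      intro i j h
      have hj' : i.val + d < n := lt_of_le_of_lt (by omega) j.isLt
      have h1 := ih i ⟨i.val + d, hj'⟩ rfl
      have h2 : f j < f ⟨i.val + d, hj'⟩ := hf (by simp [Fin.lt_def]; omega)
      omega
  intro i j hij
  exact key (j.val - i.val) i j (by omega)

lemma lemA (n : ℕ) (hn : 0 < n) (l r : Fin n → ℕ)
    (hp : IsPairPartition n l r)
    (hl : l ⟨n - 1, Nat.sub_lt hn one_pos⟩ = n) :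
    (∀ h : Fin n, l h = h.val + 1) ∧ Function.Injective r ∧
      (∀ h : Fin n, n + 1 ≤ r h ∧ r h ≤ 2 * n) := by
  obtain ⟨hlr, hmono, hu⟩ := hp
  have hmem : ∀ x ∈ Finset.univ.image l ∪ Finset.univ.image r,
      1 ≤ x ∧ x ≤ 2 * n := by
    intro x hx
    rw [hu] at hx
    exact Finset.mem_Icc.mp hx
  have hlmem : ∀ h : Fin n, 1 ≤ l h ∧ l h ≤ 2 * n := fun h =>
    hmem _ (Finset.mem_union_left _ (Finset.mem_image_of_mem _ (Finset.mem_univ h)))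
  have hrmem : ∀ h : Fin n, 1 ≤ r h ∧ r h ≤ 2 * n := fun h =>
    hmem _ (Finset.mem_union_right _ (Finset.mem_image_of_mem _ (Finset.mem_univ h)))
  -- l h = h + 1
  have hlval : ∀ h : Fin n, l h = h.val + 1 := by
    intro h
    have h0 : (⟨0, hn⟩ : Fin n).val ≤ h.val := Nat.zero_le _
    have g1 := gap_mono hmono ⟨0, hn⟩ h h0
    have g2 := gap_mono hmono h ⟨n - 1, Nat.sub_lt hn one_pos⟩ (by
      have := h.isLt; simp; omega)
    have hl0 := (hlmem ⟨0, hn⟩).1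
    simp at g1 g2
    have := h.isLt
    omega
  -- image l = Icc 1 n
  have himl : Finset.univ.image l = Finset.Icc 1 n := by
    ext x
    simp only [Finset.mem_image, Finset.mem_univ, true_and, Finset.mem_Icc]
    constructor
    · rintro ⟨h, rfl⟩
      rw [hlval h]
      have := h.isLt
      omega
    · rintro ⟨h1, h2⟩
      exact ⟨⟨x - 1, by omega⟩, by rw [hlval]; simp; omega⟩
  -- cardinality arguments
  have hlinj : Function.Injective l := hmono.injective
  have hcardl : (Finset.univ.image l).card = n := by
    rw [Finset.card_image_of_injective _ hlinj]
    simp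
  have hcardu : (Finset.univ.image l ∪ Finset.univ.image r).card = 2 * n := by
    rw [hu, Nat.card_Icc]; omega
  have hcardr_le : (Finset.univ.image r).card ≤ n := by
    calc (Finset.univ.image r).card ≤ (Finset.univ : Finset (Fin n)).card :=
          Finset.card_image_le
      _ = n := by simp
  have hle := Finset.card_union_le (Finset.univ.image l) (Finset.univ.image r)
  have hcardr : (Finset.univ.image r).card = n := by omega
  have hrinj : Function.Injective r := by
    have : Set.InjOn r (Finset.univ : Finset (Fin n)) := by
      rw [← Finset.card_image_iff]
      rw [hcardr]; simp
    intro a b hab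
    exact this (by simp) (by simp) hab
  have hinter := Finset.card_union_add_card_inter (Finset.univ.image l)
    (Finset.univ.image r)
  have hdisj : (Finset.univ.image l ∩ Finset.univ.image r).card = 0 := by omega
  rw [Finset.card_eq_zero] at hdisj
  refine ⟨hlval, hrinj, fun h => ?_⟩
  have h1 := hrmem h
  have hnot : r h ∉ Finset.univ.image l := by
    intro hmem'
    have : r h ∈ Finset.univ.image l ∩ Finset.univ.image r :=
      Finset.mem_inter.mpr ⟨hmem',
        Finset.mem_image_of_mem _ (Finset.mem_univ h)⟩
    rw [hdisj] at this
    simp at this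
  rw [himl, Finset.mem_Icc] at hnot
  push_neg at hnot
  constructor
  · by_contra hc
    push_neg at hc
    have := hnot (h1.1)
    omega
  · exact h1.2

theorem stmt_17 (n : ℕ) (hn : 0 < n) :
    (∀ l r : Fin n → ℕ,
      IsPairPartition n l r → IsNonCrossing n l r →
      l ⟨n - 1, Nat.sub_lt hn one_pos⟩ = n →
      ∀ h : Fin n, l h = h.val + 1 ∧ r h = 2 * n - h.val) ∧
    Nat.card {p : (Fin n → ℕ) × (Fin n → ℕ) //
        IsPairPartition n p.1 p.2 ∧
        p.1 ⟨n - 1, Nat.sub_lt hn one_pos⟩ = n} = Nat.factorial n := by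
  constructor
  · -- Part 1
    intro l r hp hnc hl h
    obtain ⟨hlval, hrinj, hrb⟩ := lemA n hn l r hp hl
    refine ⟨hlval h, ?_⟩
    -- r is strictly antitone
    have hanti : StrictAnti r := by
      intro a b hab
      have hk : l b < r a := by
        rw [hlval b]
        have := b.isLt
        have := (hrb a).1
        omega
      exact (hnc a b hab).mp hk
    have g1 := gap_anti hanti ⟨0, hn⟩ h (Nat.zero_le _)
    have g2 := gap_anti hanti h ⟨n - 1, Nat.sub_lt hn one_pos⟩ (by
      have := h.isLt; simp; omega)
    have h1 := (hrb ⟨0, hn⟩).2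
    have h2 := (hrb ⟨n - 1, Nat.sub_lt hn one_pos⟩).1
    simp at g1 g2
    have := h.isLt
    omega
  · -- Part 2
    set S := {p : (Fin n → ℕ) × (Fin n → ℕ) //
        IsPairPartition n p.1 p.2 ∧
        p.1 ⟨n - 1, Nat.sub_lt hn one_pos⟩ = n} with hS
    have hPP : ∀ σ : Equiv.Perm (Fin n),
        IsPairPartition n (fun h : Fin n => h.val + 1)
          (fun h : Fin n => n + 1 + (σ h).val) := by
      intro σ
      refine ⟨fun h => by show h.val + 1 < n + 1 + (σ h).val; have := h.isLt; omega, ?_, ?_⟩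
      · intro a b hab
        have := Fin.lt_def.mp hab
        simp; omega
      · ext x
        simp only [Finset.mem_union, Finset.mem_image, Finset.mem_univ, true_and,
          Finset.mem_Icc]
        constructor
        · rintro (⟨h, rfl⟩ | ⟨h, rfl⟩)
          · have := h.isLt; omega
          · have := (σ h).isLt; omega
        · rintro ⟨h1, h2⟩
          by_cases hx : x ≤ n
          · exact Or.inl ⟨⟨x - 1, by omega⟩, by simp; omega⟩
          · refine Or.inr ⟨σ.symm ⟨x - (n + 1), by omega⟩, ?_⟩
            rw [Equiv.apply_symm_apply]
            simp; omega
    let F : Equiv.Perm (Fin n) → S := fun σ =>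
      ⟨((fun h : Fin n => h.val + 1), (fun h : Fin n => n + 1 + (σ h).val)),
        hPP σ, by show (n-1)+1 = n; omega⟩
    have hFbij : Function.Bijective F := by
      constructor
      · intro σ τ hst
        ext h
        have h1 := congrArg (fun p => p.val.2 h) hst
        simp [F] at h1
        omega
      · rintro ⟨⟨l, r⟩, hp, hl⟩
        obtain ⟨hlval, hrinj, hrb⟩ := lemA n hn l r hp hl
        have hfb : Function.Bijective
            (fun h : Fin n => (⟨r h - (n + 1), by have := hrb h; omega⟩ : Fin n)) := by
          rw [← Finite.injective_iff_bijective]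
          intro a b hab
          apply hrinj
          have hab' := Fin.val_eq_of_eq hab
          simp at hab'
          have := hrb a; have := hrb b
          omega
        refine ⟨Equiv.ofBijective _ hfb, ?_⟩
        apply Subtype.ext
        simp only [F]
        apply Prod.ext
        · funext h
          exact (hlval h).symm
        · funext h
          show n + 1 + ((Equiv.ofBijective _ hfb) h).val = r h
          rw [Equiv.ofBijective_apply]
          have := hrb h
          simp; omega
    have := Nat.card_eq_of_bijective F hFbij
    rw [← this, Nat.card_eq_fintype_card, Fintype.card_perm, Fintype.card_fin]
end

section
/- For every n ≥ 1, the number of non-crossing pair partitions of {1,...,2n} with l_n = n+1 (i.e. 2n - l_n = n-1) equals n - 1. -/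
def Lf (n c : ℕ) : Fin n → ℕ := fun h => if (h : ℕ) < c then h + 1 else h + 2

def Rf (n c : ℕ) : Fin n → ℕ := fun h =>
  if (h : ℕ) + 1 < c then 2 * n - h else if (h : ℕ) + 1 = c then c + 1 else 2 * n + 1 - h

lemma smono_add {m : ℕ} {f : Fin m → ℕ} (hf : StrictMono f) :
    ∀ d (i j : Fin m), (i : ℕ) + d = (j : ℕ) → f i + d ≤ f j := by
  intro d
  induction d with
  | zero => intro i j hij; have : i = j := Fin.ext (by omega); rw [this]; omega
  | succ d ih =>
    intro i j hij
    have hlt : (i : ℕ) + d < m := by omega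
    have h1 := ih i ⟨(i : ℕ) + d, hlt⟩ rfl
    have h2 : f ⟨(i : ℕ) + d, hlt⟩ < f j := hf (by simp [Fin.lt_def]; omega)
    omega

lemma santi_add {m : ℕ} {f : Fin m → ℕ} (hf : ∀ i j : Fin m, i < j → f j < f i) :
    ∀ d (i j : Fin m), (i : ℕ) + d = (j : ℕ) → f j + d ≤ f i := by
  intro d
  induction d with
  | zero => intro i j hij; have : i = j := Fin.ext (by omega); rw [this]; omega
  | succ d ih =>
    intro i j hij
    have hlt : (i : ℕ) + d < m := by omega
    have h1 := ih i ⟨(i : ℕ) + d, hlt⟩ rfl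
    have h2 : f j < f ⟨(i : ℕ) + d, hlt⟩ := hf _ _ (by simp [Fin.lt_def]; omega)
    omega

lemma model_union (n c : ℕ) (h1 : 1 ≤ c) (h2 : c + 1 ≤ n) :
    Finset.univ.image (Lf n c) ∪ Finset.univ.image (Rf n c) = Finset.Icc 1 (2 * n) := by
  ext x
  simp only [Finset.mem_union, Finset.mem_image, Finset.mem_univ, true_and, Finset.mem_Icc,
    Lf, Rf]
  constructor
  · rintro (⟨h, hh⟩ | ⟨h, hh⟩) <;> have := h.isLt <;> split_ifs at hh <;> omega
  · intro hx
    by_cases hc1 : x ≤ c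
    · exact Or.inl ⟨⟨x - 1, by omega⟩, by simp; split_ifs <;> omega⟩
    by_cases hc2 : x = c + 1
    · exact Or.inr ⟨⟨c - 1, by omega⟩, by simp; split_ifs <;> omega⟩
    by_cases hc3 : x ≤ n + 1
    · exact Or.inl ⟨⟨x - 2, by omega⟩, by simp; split_ifs <;> omega⟩
    by_cases hc4 : 2 * n - x + 1 < c
    · exact Or.inr ⟨⟨2 * n - x, by omega⟩, by simp; split_ifs <;> omega⟩
    · exact Or.inr ⟨⟨2 * n + 1 - x, by omega⟩, by simp; split_ifs <;> omega⟩

lemma model_mem (n c : ℕ) (h1 : 1 ≤ c) (h2 : c + 1 ≤ n) (hn : 1 ≤ n) :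
    IsPairPartition n (Lf n c) (Rf n c) ∧ IsNonCrossing n (Lf n c) (Rf n c) ∧
      Lf n c ⟨n - 1, Nat.sub_lt hn one_pos⟩ = n + 1 := by
  refine ⟨⟨?_, ?_, model_union n c h1 h2⟩, ?_, ?_⟩
  · intro h
    have := h.isLt
    simp only [Lf, Rf]
    split_ifs <;> omega
  · intro a b hab
    have := b.isLt
    rw [Fin.lt_def] at hab
    simp only [Lf]
    split_ifs <;> omega
  · intro h k hk
    have := h.isLt
    have := k.isLt
    rw [Fin.lt_def] at hk
    simp only [Lf, Rf]
    split_ifs <;> omega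
  · simp only [Lf]
    split_ifs <;> omega

lemma surj_aux (n : ℕ) (hn : 1 ≤ n) (l r : Fin n → ℕ) (hpp : IsPairPartition n l r)
    (hnc : IsNonCrossing n l r) (hl : l ⟨n - 1, Nat.sub_lt hn one_pos⟩ = n + 1) :
    ∃ c, 1 ≤ c ∧ c + 1 ≤ n ∧ l = Lf n c ∧ r = Rf n c := by
  classical
  obtain ⟨hlr, hmono, hunion⟩ := hpp
  -- basic range facts
  have hmeml : ∀ h : Fin n, 1 ≤ l h ∧ l h ≤ 2 * n := by
    intro h
    have : l h ∈ Finset.Icc 1 (2 * n) := by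
      rw [← hunion]
      exact Finset.mem_union_left _ (Finset.mem_image_of_mem l (Finset.mem_univ h))
    simpa using this
  have hmemr : ∀ h : Fin n, 1 ≤ r h ∧ r h ≤ 2 * n := by
    intro h
    have : r h ∈ Finset.Icc 1 (2 * n) := by
      rw [← hunion]
      exact Finset.mem_union_right _ (Finset.mem_image_of_mem r (Finset.mem_univ h))
    simpa using this
  -- bounds on l
  have hub : ∀ h : Fin n, l h ≤ (h : ℕ) + 2 := by
    intro h
    have := smono_add hmono (n - 1 - h) h ⟨n - 1, Nat.sub_lt hn one_pos⟩
      (by have := h.isLt; simp; omega)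
    rw [hl] at this
    have := h.isLt
    omega
  have hlb : ∀ h : Fin n, (h : ℕ) + 1 ≤ l h := by
    intro h
    have h0 : (0 : ℕ) < n := hn
    have := smono_add hmono h ⟨0, h0⟩ h (by simp)
    have := (hmeml ⟨0, h0⟩).1
    omega
  have hup : ∀ h k : Fin n, (h : ℕ) ≤ (k : ℕ) → l h = (h : ℕ) + 2 → l k = (k : ℕ) + 2 := by
    intro h k hhk hh
    have := smono_add hmono ((k : ℕ) - h) h k (by omega)
    have := hub k
    omega
  -- the threshold c
  have hPn : ∀ h : Fin n, n - 1 ≤ (h : ℕ) → l h = (h : ℕ) + 2 := by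
    intro h hh
    have hlt := h.isLt
    have : h = ⟨n - 1, Nat.sub_lt hn one_pos⟩ := Fin.ext (by simp; omega)
    rw [this, hl]
    simp
    omega
  set P : ℕ → Prop := fun m => ∀ h : Fin n, m ≤ (h : ℕ) → l h = (h : ℕ) + 2 with hP
  have hex : ∃ m, P m := ⟨n - 1, hPn⟩
  set c := Nat.find hex with hc
  have hc_le : c ≤ n - 1 := Nat.find_le hPn
  have hgc : ∀ h : Fin n, c ≤ (h : ℕ) → l h = (h : ℕ) + 2 := Nat.find_spec hex
  have hlc : ∀ h : Fin n, (h : ℕ) < c → l h = (h : ℕ) + 1 := by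
    intro h hh
    have hnP : ¬ P (h : ℕ) := Nat.find_min hex hh
    simp only [hP] at hnP
    push_neg at hnP
    obtain ⟨k, hk1, hk2⟩ := hnP
    by_contra hcon
    have hh2 : l h = (h : ℕ) + 2 := by have := hub h; have := hlb h; omega
    exact hk2 (hup h k hk1 hh2)
  have hc1 : 1 ≤ c := by
    by_contra hcon
    have h0 : (0 : ℕ) < n := hn
    have h1mem : (1 : ℕ) ∈ Finset.Icc 1 (2 * n) := by simp; omega
    rw [← hunion] at h1mem
    rcases Finset.mem_union.1 h1mem with hm | hm
    · obtain ⟨k, _, hk⟩ := Finset.mem_image.1 hm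
      have := hgc k (by omega)
      omega
    · obtain ⟨k, _, hk⟩ := Finset.mem_image.1 hm
      have := hlr k
      have := hlb k
      omega
  have hcn : c + 1 ≤ n := by omega
  have hLeq : l = Lf n c := by
    funext h
    simp only [Lf]
    by_cases hh : (h : ℕ) < c
    · rw [hlc h hh, if_pos hh]
    · rw [hgc h (by omega), if_neg hh]
  -- image of l
  have himl : Finset.univ.image l = (Finset.Icc 1 (n+1)).erase (c+1) := by
    ext x
    simp only [Finset.mem_image, Finset.mem_univ, true_and, Finset.mem_erase, Finset.mem_Icc]
    constructor
    · rintro ⟨h, rfl⟩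
      have := h.isLt
      by_cases hh : (h : ℕ) < c
      · rw [hlc h hh]; omega
      · rw [hgc h (by omega)]; omega
    · rintro ⟨hx1, hx2, hx3⟩
      by_cases hxc : x ≤ c
      · exact ⟨⟨x-1, by omega⟩, by rw [hlc _ (by simp; omega)]; simp; omega⟩
      · exact ⟨⟨x-2, by omega⟩, by rw [hgc _ (by simp; omega)]; simp; omega⟩
  have hlinj : Function.Injective l := hmono.injective
  have hlsub : Finset.univ.image l ⊆ Finset.Icc 1 (2*n) := hunion ▸ Finset.subset_union_left
  have hcardl : (Finset.univ.image l).card = n := by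
    rw [Finset.card_image_of_injective _ hlinj, Finset.card_univ, Fintype.card_fin]
  have hsub1 : Finset.Icc 1 (2*n) \ Finset.univ.image l ⊆ Finset.univ.image r := by
    intro x hx
    obtain ⟨hx1, hx2⟩ := Finset.mem_sdiff.1 hx
    rw [← hunion] at hx1
    rcases Finset.mem_union.1 hx1 with h | h
    · exact absurd h hx2
    · exact h
  have hcards : (Finset.Icc 1 (2*n) \ Finset.univ.image l).card = n := by
    rw [Finset.card_sdiff_of_subset hlsub, hcardl, Nat.card_Icc]
    omega
  have himr : Finset.univ.image r = Finset.Icc 1 (2*n) \ Finset.univ.image l := by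
    refine (Finset.eq_of_subset_of_card_le hsub1 ?_).symm
    rw [hcards]
    exact le_trans Finset.card_image_le (by simp)
  have hcardr : (Finset.univ.image r).card = n := by rw [himr, hcards]
  have hrinj : Function.Injective r := by
    have h2 := Finset.card_image_iff.mp
      (show (Finset.univ.image r).card = (Finset.univ : Finset (Fin n)).card by
        rw [hcardr, Finset.card_univ, Fintype.card_fin])
    intro a b hab
    exact h2 (Finset.mem_coe.2 (Finset.mem_univ a)) (Finset.mem_coe.2 (Finset.mem_univ b)) hab
  have hrset : ∀ h : Fin n, r h = c + 1 ∨ (n + 2 ≤ r h ∧ r h ≤ 2 * n) := by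
    intro h
    have hm : r h ∈ Finset.univ.image r := Finset.mem_image_of_mem r (Finset.mem_univ h)
    rw [himr, himl] at hm
    simp only [Finset.mem_sdiff, Finset.mem_Icc, Finset.mem_erase] at hm
    omega
  have hk0lt : c - 1 < n := by omega
  set k0 : Fin n := ⟨c - 1, hk0lt⟩ with hk0
  have hk0v : (k0 : ℕ) = c - 1 := rfl
  have hr0 : r k0 = c + 1 := by
    have hmem : (c + 1) ∈ Finset.univ.image r := by
      rw [himr, himl]
      simp only [Finset.mem_sdiff, Finset.mem_erase, Finset.mem_Icc]
      omega
    obtain ⟨k, _, hk⟩ := Finset.mem_image.1 hmem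
    have hkle : (k : ℕ) ≤ c - 1 := by
      have := hlr k
      have := hlb k
      omega
    have hkeq : k = k0 := by
      refine Fin.ext ?_
      rw [hk0v]
      by_contra hne
      have hklt : k < k0 := by rw [Fin.lt_def, hk0v]; omega
      have hlj : l k0 < r k := by
        rw [hlc k0 (by rw [hk0v]; omega), hk, hk0v]
        omega
      have hrc := (hnc k k0 hklt).1 hlj
      rw [hk] at hrc
      rcases hrset k0 with hcase | hcase <;> omega
    rw [← hkeq]
    exact hk
  have hge : ∀ h : Fin n, h ≠ k0 → n + 2 ≤ r h ∧ r h ≤ 2 * n := by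
    intro h hne
    rcases hrset h with he | hb
    · exact absurd (hrinj (he.trans hr0.symm)) hne
    · exact hb
  have hranti : ∀ h k : Fin n, h < k → h ≠ k0 → k ≠ k0 → r k < r h := by
    intro h k hk hh1 hk1
    have h1 := (hge h hh1).1
    have h2 := hub k
    have h3 := k.isLt
    exact (hnc h k hk).1 (by omega)
  have hι : ∀ j : Fin (n-1), (if (j:ℕ) < c - 1 then (j:ℕ) else (j:ℕ)+1) < n := by
    intro j; have := j.isLt; split_ifs <;> omega
  set ι : Fin (n-1) → Fin n := fun j => ⟨if (j:ℕ) < c - 1 then (j:ℕ) else (j:ℕ)+1, hι j⟩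
    with hιdef
  have hιne : ∀ j, ι j ≠ k0 := by
    intro j hje
    have hv := congrArg Fin.val hje
    rw [hιdef, hk0v] at hv
    simp at hv
    split_ifs at hv <;> omega
  have hιmono : ∀ j j' : Fin (n-1), j < j' → ι j < ι j' := by
    intro j j' hjj
    rw [Fin.lt_def] at hjj ⊢
    simp [hιdef]
    split_ifs <;> omega
  have hfanti : ∀ i j : Fin (n-1), i < j → r (ι j) < r (ι i) :=
    fun i j hij => hranti _ _ (hιmono i j hij) (hιne i) (hιne j)
  have hfval : ∀ j : Fin (n-1), r (ι j) = 2*n - (j:ℕ) := by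
    intro j
    have hj := j.isLt
    have h0 : (0:ℕ) < n - 1 := by omega
    have hup' := santi_add hfanti (j:ℕ) ⟨0, h0⟩ j (by simp)
    have h1 := (hge (ι ⟨0,h0⟩) (hιne _)).2
    have hmax : n - 2 < n - 1 := by omega
    have hlow := santi_add hfanti ((n-2) - (j:ℕ)) j ⟨n-2, hmax⟩ (by simp; omega)
    have h2 := (hge (ι ⟨n-2,hmax⟩) (hιne _)).1
    omega
  have hfin : r = Rf n c := by
    funext h
    have hhlt := h.isLt
    simp only [Rf]
    by_cases hA : (h:ℕ) + 1 < c
    · rw [if_pos hA]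
      have hjlt : (h:ℕ) < n - 1 := by omega
      have heq : ι ⟨(h:ℕ), hjlt⟩ = h := by
        refine Fin.ext ?_
        rw [hιdef]
        simp
        omega
      have hv := hfval ⟨(h:ℕ), hjlt⟩
      rw [heq] at hv
      exact hv
    · by_cases hB : (h:ℕ) + 1 = c
      · rw [if_neg hA, if_pos hB]
        have heqh : h = k0 := Fin.ext (by rw [hk0v]; omega)
        rw [heqh, hr0]
      · rw [if_neg hA, if_neg hB]
        have hjlt : (h:ℕ) - 1 < n - 1 := by omega
        have heq : ι ⟨(h:ℕ)-1, hjlt⟩ = h := by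
          refine Fin.ext ?_
          rw [hιdef]
          simp
          split_ifs <;> omega
        have hv := hfval ⟨(h:ℕ)-1, hjlt⟩
        rw [heq] at hv
        have hv' : r h = 2*n - ((h:ℕ)-1) := hv
        omega
  exact ⟨c, hc1, hcn, hLeq, hfin⟩

lemma Lf_ne {n c c' : ℕ} (hcn : c < n) (hcc : c < c') : Lf n c ≠ Lf n c' := by
  intro h
  have h1 := congrFun h ⟨c, hcn⟩
  have h2 : (if c < c then c + 1 else c + 2) = (if c < c' then c + 1 else c + 2) := h1
  split_ifs at h2 <;> omega

theorem stmt_18 (n : ℕ) (hn : 1 ≤ n) :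
    Nat.card {p : (Fin n → ℕ) × (Fin n → ℕ) //
        IsPairPartition n p.1 p.2 ∧ IsNonCrossing n p.1 p.2 ∧
        p.1 ⟨n - 1, Nat.sub_lt hn one_pos⟩ = n + 1} = n - 1 := by
  have hcard : Nat.card (Fin (n - 1)) = n - 1 := by simp
  refine Eq.trans ?_ hcard
  refine (Nat.card_eq_of_bijective
    (fun t : Fin (n - 1) => ⟨(Lf n ((t : ℕ) + 1), Rf n ((t : ℕ) + 1)),
      model_mem n ((t : ℕ) + 1) (by omega) (by have := t.isLt; omega) hn⟩) ⟨?_, ?_⟩).symm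
  · intro t t' heq
    have hL : Lf n ((t : ℕ) + 1) = Lf n ((t' : ℕ) + 1) :=
      congrArg (fun p => p.1.1) heq
    have ht := t.isLt
    have ht' := t'.isLt
    refine Fin.ext ?_
    by_contra hne
    rcases Nat.lt_or_ge (t : ℕ) (t' : ℕ) with hlt | hge
    · exact Lf_ne (by omega) (by omega) hL
    · exact Lf_ne (by omega) (by omega) hL.symm
  · rintro ⟨⟨l, r⟩, hpp, hnc, hl⟩
    obtain ⟨c, hc1, hcn, hLeq, hReq⟩ := surj_aux n hn l r hpp hnc hl
    refine ⟨⟨c - 1, by omega⟩, ?_⟩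
    apply Subtype.ext
    show (Lf n (c - 1 + 1), Rf n (c - 1 + 1)) = (l, r)
    rw [show c - 1 + 1 = c from by omega, hLeq, hReq]
end
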